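/- arXiv:1510.04073 — 4 statements merged into one kernel-verified Lean document; each statement's English description precedes it below -/
import Mathlib

section
/- Let 𝒜 be a linear hyperplane arrangement in ℝ^n with characteristic polynomial χ_𝒜(t) = Σ_{k=0}^n (−1)^{n−k} a_k t^k, and let L be a linear subspace of ℝ^n of codimension d with 1 ≤ d ≤ n−1 that is in general position with respect to 𝒜. Let 𝒜|L = {H ∩ L : H ∈ 𝒜} be the induced arrangement of hyperplanes in L ≅ ℝ^{n−d}. Then the characteristic polynomial of 𝒜|L (computed in L, of dimension n−d) equals χ_{𝒜|L}(t) = Σ_{k=0}^{d} (−1)^{n−k} a_k + Σ_{k=d+1}^{n} (−1)^{n−k} a_k t^{k−d}. -/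
/-!
Whitney's formula for `𝒜|L` may be summed over the subsets `B` of `𝒜` instead of the subsets
of `𝒜|L`, even when distinct hyperplanes have the same trace on `L`: the subsets of `𝒜` with a
given image `C` have signed count `(-1)^#C`. General position makes the term of `B` equal to
`(-1)^#B t^((n - d) - rank B)`, so `χ_{𝒜|L}` arises from `χ_𝒜` by replacing each `t^k` with
`t^(k - d)`, truncated at `t^0`.
-/

open Finset Module Polynomial

/-- The rank of a finite collection `B` of linear subspaces of `ℝ^n`:
`n` minus the dimension of their intersection (the intersection over `∅` is `ℝ^n`). -/
noncomputable def arrRank (n : ℕ) (B : Finset (Submodule ℝ (Fin n → ℝ))) : ℕ :=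
  n - Module.finrank ℝ ↥(B.inf id)

/-- The characteristic polynomial of a linear hyperplane arrangement `𝒜` in `ℝ^n`:
`χ_𝒜(t) = ∑_{B ⊆ 𝒜} (−1)^{#B} t^{n − rank B}` (Whitney's formula). -/
noncomputable def arrCharPoly (n : ℕ) (𝒜 : Finset (Submodule ℝ (Fin n → ℝ))) :
    Polynomial ℤ :=
  ∑ B ∈ 𝒜.powerset, ((-1 : ℤ) ^ B.card) • (Polynomial.X ^ (n - arrRank n B))

/-- The rank, computed inside the subspace `L`, of a finite collection `B` of linear
subspaces of `ℝ^n` contained in `L`:  `dim L` minus the dimension of their intersection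
(the intersection over `∅` is `L`). -/
noncomputable def arrRankIn (n : ℕ) (L : Submodule ℝ (Fin n → ℝ))
    (B : Finset (Submodule ℝ (Fin n → ℝ))) : ℕ :=
  Module.finrank ℝ ↥L - Module.finrank ℝ ↥(L ⊓ B.inf id)

/-- The characteristic polynomial, computed inside the subspace `L` (of its dimension),
of an arrangement of hyperplanes of `L`. -/
noncomputable def arrCharPolyIn (n : ℕ) (L : Submodule ℝ (Fin n → ℝ))
    (𝒜 : Finset (Submodule ℝ (Fin n → ℝ))) : Polynomial ℤ :=
  ∑ B ∈ 𝒜.powerset,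
    ((-1 : ℤ) ^ B.card) •
      (Polynomial.X ^ (Module.finrank ℝ ↥L - arrRankIn n L B))

/-- `L` (of codimension `d`) is in general position w.r.t. the arrangement `𝒜`:
for every nonempty `B ⊆ 𝒜`, `dim(∩_{H∈B} (H ∩ L)) = (n−d) − rank B` if `rank B ≤ n−d`,
and `= 0` if `rank B ≥ n−d` (both cases are expressed by the truncated subtraction). -/
def arrGenPos (n d : ℕ) (𝒜 : Finset (Submodule ℝ (Fin n → ℝ)))
    (L : Submodule ℝ (Fin n → ℝ)) : Prop :=
  ∀ B ∈ 𝒜.powerset, B.Nonempty →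
    Module.finrank ℝ ↥(B.inf id ⊓ L) = (n - d) - arrRank n B

namespace Finset

variable {α β M : Type*} [DecidableEq α] [DecidableEq β] [AddCommGroup M]

theorem sum_powerset_neg_one_pow_card_smul_insert_of_mem {s : Finset β} {b : β} (hb : b ∈ s)
    (F : Finset β → M) : ∑ t ∈ s.powerset, (-1 : ℤ) ^ t.card • F (insert b t) = 0 := by
  rw [← insert_erase hb, sum_powerset_insert (notMem_erase b s), ← sum_add_distrib]
  refine sum_eq_zero fun t ht => ?_
  have hbt : b ∉ t := fun h => notMem_erase b s (mem_powerset.mp ht h)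
  rw [insert_idem, card_insert_of_notMem hbt, pow_succ, mul_neg_one, neg_smul, add_neg_cancel]

theorem sum_powerset_neg_one_pow_card_smul_image (g : α → β) (s : Finset α)
    (F : Finset β → M) :
    ∑ t ∈ s.powerset, (-1 : ℤ) ^ t.card • F (t.image g)
      = ∑ u ∈ (s.image g).powerset, (-1 : ℤ) ^ u.card • F u := by
  induction s using Finset.induction_on generalizing F with
  | empty => simp
  | insert a s ha ih =>
    have hinsert : ∑ t ∈ s.powerset, (-1 : ℤ) ^ (insert a t).card • F ((insert a t).image g)
        = -∑ u ∈ (s.image g).powerset, (-1 : ℤ) ^ u.card • F (insert (g a) u) := by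
      rw [← ih, ← sum_neg_distrib]
      refine sum_congr rfl fun t ht => ?_
      rw [card_insert_of_notMem fun h => ha (mem_powerset.mp ht h), image_insert, pow_succ,
        mul_neg_one, neg_smul]
    rw [sum_powerset_insert ha, hinsert, ih, image_insert]
    by_cases hga : g a ∈ s.image g
    · rw [insert_eq_of_mem hga, sum_powerset_neg_one_pow_card_smul_insert_of_mem hga, neg_zero,
        add_zero]
    · rw [sum_powerset_insert hga, ← sum_neg_distrib]
      refine congrArg _ (sum_congr rfl fun u hu => ?_)
      rw [card_insert_of_notMem fun h => hga (mem_powerset.mp hu h), pow_succ, mul_neg_one,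
        neg_smul]

theorem inf_image_inf_right_inf [SemilatticeInf β] [OrderTop β] (s : Finset β) (a : β) :
    a ⊓ (s.image (· ⊓ a)).inf id = s.inf id ⊓ a := by
  rw [inf_image]
  refine le_antisymm ?_ ?_
  · exact _root_.le_inf (Finset.le_inf fun b hb => inf_le_right.trans
      ((Finset.inf_le (f := id ∘ (· ⊓ a)) hb).trans inf_le_left)) inf_le_left
  · exact _root_.le_inf inf_le_right (Finset.le_inf fun b hb =>
      _root_.le_inf (inf_le_left.trans (Finset.inf_le hb)) inf_le_right)

end Finset

namespace Polynomial

variable {R : Type*} [Semiring R]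

/-- `X ^ k ↦ X ^ (k - d)` with truncated subtraction: the coefficients of `X ^ 0, …, X ^ d` all
land in the constant term. -/
noncomputable def shiftDown (d : ℕ) : R[X] →ₗ[R] R[X] :=
  lsum fun k => monomial (k - d)

theorem shiftDown_X_pow (d e : ℕ) : shiftDown d (X ^ e : R[X]) = X ^ (e - d) := by
  simp [shiftDown, ← monomial_one_right_eq_X_pow]

theorem shiftDown_eq_sum {p : R[X]} {n : ℕ} (hp : p.natDegree ≤ n) (d : ℕ) :
    shiftDown d p = ∑ k ∈ range (d + 1), C (p.coeff k)
      + ∑ k ∈ Icc (d + 1) n, C (p.coeff k) * X ^ (k - d) := by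
  have hlow : ∑ k ∈ range (d + 1), C (p.coeff k)
      = ∑ k ∈ range (d + 1), C (p.coeff k) * X ^ (k - d) := by
    refine sum_congr rfl fun k hk => ?_
    rw [Nat.sub_eq_zero_of_le (Nat.lt_succ_iff.mp (mem_range.mp hk)), pow_zero, mul_one]
  have hdisj : Disjoint (range (d + 1)) (Icc (d + 1) n) :=
    disjoint_left.mpr fun k hk hk' => by simp only [mem_range, mem_Icc] at hk hk'; omega
  rw [hlow, ← sum_union hdisj, shiftDown, lsum_apply, Polynomial.sum_def]
  simp only [C_mul_X_pow_eq_monomial]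
  refine sum_subset (fun k hk => ?_) fun k _ hk => by rw [notMem_support_iff.mp hk, map_zero]
  have := (le_natDegree_of_mem_supp k hk).trans hp
  simp only [mem_union, mem_range, mem_Icc]
  omega

end Polynomial

theorem arrRank_empty (n : ℕ) : arrRank n ∅ = 0 := by
  rw [arrRank, inf_empty, finrank_top, finrank_fin_fun, Nat.sub_self]

theorem natDegree_arrCharPoly_le (n : ℕ) (𝒜 : Finset (Submodule ℝ (Fin n → ℝ))) :
    (arrCharPoly n 𝒜).natDegree ≤ n :=
  natDegree_sum_le_of_forall_le _ _ fun _ _ =>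
    (natDegree_smul_le _ _).trans ((natDegree_X_pow_le _).trans (Nat.sub_le _ _))

theorem shiftDown_arrCharPoly (n d : ℕ) (𝒜 : Finset (Submodule ℝ (Fin n → ℝ))) :
    shiftDown d (arrCharPoly n 𝒜)
      = ∑ B ∈ 𝒜.powerset, (-1 : ℤ) ^ B.card • (X : ℤ[X]) ^ (n - arrRank n B - d) := by
  simp only [arrCharPoly, map_sum, map_smul, shiftDown_X_pow]

theorem finrank_sub_arrRankIn (n : ℕ) (L : Submodule ℝ (Fin n → ℝ))
    (B : Finset (Submodule ℝ (Fin n → ℝ))) :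
    finrank ℝ L - arrRankIn n L B = finrank ℝ ↥(L ⊓ B.inf id) :=
  Nat.sub_sub_self (Submodule.finrank_mono inf_le_left)

theorem arrCharPolyIn_image_inf (n : ℕ) [DecidableEq (Submodule ℝ (Fin n → ℝ))]
    (𝒜 : Finset (Submodule ℝ (Fin n → ℝ))) (L : Submodule ℝ (Fin n → ℝ)) :
    arrCharPolyIn n L (𝒜.image (· ⊓ L))
      = ∑ B ∈ 𝒜.powerset, (-1 : ℤ) ^ B.card • (X : ℤ[X]) ^ finrank ℝ ↥(B.inf id ⊓ L) := by
  rw [arrCharPolyIn, ← sum_powerset_neg_one_pow_card_smul_image]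
  refine sum_congr rfl fun B _ => ?_
  rw [finrank_sub_arrRankIn, inf_image_inf_right_inf]

theorem arrGenPos.finrank_inf_eq {n d : ℕ} {𝒜 : Finset (Submodule ℝ (Fin n → ℝ))}
    {L : Submodule ℝ (Fin n → ℝ)} (hGP : arrGenPos n d 𝒜 L) (hL : finrank ℝ L = n - d)
    {B : Finset (Submodule ℝ (Fin n → ℝ))} (hB : B ∈ 𝒜.powerset) :
    finrank ℝ ↥(B.inf id ⊓ L) = n - d - arrRank n B := by
  rcases B.eq_empty_or_nonempty with rfl | hne
  · rw [inf_empty, top_inf_eq, hL, arrRank_empty, Nat.sub_zero]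
  · exact hGP B hB hne

theorem charPoly_restriction_general
    (n d : ℕ) [DecidableEq (Submodule ℝ (Fin n → ℝ))]
    (𝒜 : Finset (Submodule ℝ (Fin n → ℝ)))
    (L : Submodule ℝ (Fin n → ℝ)) (hL : Module.finrank ℝ ↥L = n - d)
    (hGP : arrGenPos n d 𝒜 L)
    (a : ℕ → ℤ)
    (ha : ∀ k, (arrCharPoly n 𝒜).coeff k = (-1) ^ (n - k) * a k) :
    arrCharPolyIn n L (𝒜.image (fun H => H ⊓ L))
      = (∑ k ∈ Finset.range (d + 1), Polynomial.C ((-1) ^ (n - k) * a k))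
        + ∑ k ∈ Finset.Icc (d + 1) n,
            Polynomial.C ((-1) ^ (n - k) * a k) * Polynomial.X ^ (k - d) := by
  simp only [← ha]
  rw [← shiftDown_eq_sum (natDegree_arrCharPoly_le n 𝒜), shiftDown_arrCharPoly,
    arrCharPolyIn_image_inf]
  refine sum_congr rfl fun B hB => ?_
  rw [hGP.finrank_inf_eq hL hB, Nat.sub_right_comm]

/-- The characteristic polynomial of the arrangement induced on a generic subspace `L`
of codimension `d`: `χ_{𝒜|L}(t) = ∑_{k=0}^{d} (−1)^{n−k} a_k + ∑_{k=d+1}^{n} (−1)^{n−k} a_k t^{k−d}`. -/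
theorem charPoly_restriction
    (n d : ℕ) [DecidableEq (Submodule ℝ (Fin n → ℝ))]
    (hd : 1 ≤ d) (hdn : d + 1 ≤ n)
    (𝒜 : Finset (Submodule ℝ (Fin n → ℝ)))
    (h𝒜 : ∀ H ∈ 𝒜, Module.finrank ℝ ↥H = n - 1)
    (L : Submodule ℝ (Fin n → ℝ)) (hL : Module.finrank ℝ ↥L = n - d)
    (hGP : arrGenPos n d 𝒜 L)
    (a : ℕ → ℤ)
    (ha : ∀ k, (arrCharPoly n 𝒜).coeff k = (-1) ^ (n - k) * a k) :
    arrCharPolyIn n L (𝒜.image (fun H => H ⊓ L))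
      = (∑ k ∈ Finset.range (d + 1), Polynomial.C ((-1) ^ (n - k) * a k))
        + ∑ k ∈ Finset.Icc (d + 1) n,
            Polynomial.C ((-1) ^ (n - k) * a k) * Polynomial.X ^ (k - d) :=
  charPoly_restriction_general n d 𝒜 L hL hGP a ha
end

section
/- Let 𝒜(B_n) be the reflection arrangement in ℝ^n consisting of the hyperplanes {x_i = x_j} and {x_i = −x_j} for 1 ≤ i < j ≤ n, and {x_k = 0} for 1 ≤ k ≤ n, and let L be a linear subspace of ℝ^n of codimension d, 1 ≤ d ≤ n−1, in general position with respect to 𝒜(B_n). Then the number of regions of 𝒜(B_n) intersected by L equals 2(B(n, d+1) + B(n, d+3) + ⋯). -/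
open Finset Module

/-- The `B`-analogues of the unsigned Stirling numbers of the first kind:
coefficients of `(t+1)(t+3)⋯(t+2n−1)`. -/
noncomputable def Bcoef (n k : ℕ) : ℕ :=
  (∏ i ∈ Finset.range n, (Polynomial.X + Polynomial.C (2 * i + 1))).coeff k

/-- The reflection arrangement of type `B_n` in `ℝ^n`: the hyperplanes
`{x : x i = x j}`, `{x : x i = −x j}` for `i < j`, and `{x : x k = 0}`. -/
def arrangementB (n : ℕ) : Set (Submodule ℝ (Fin n → ℝ)) :=
  {H | (∃ i j : Fin n, i < j ∧
      H = LinearMap.ker ((LinearMap.proj i : (Fin n → ℝ) →ₗ[ℝ] ℝ) - LinearMap.proj j))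
    ∨ (∃ i j : Fin n, i < j ∧
      H = LinearMap.ker ((LinearMap.proj i : (Fin n → ℝ) →ₗ[ℝ] ℝ) + LinearMap.proj j))
    ∨ (∃ k : Fin n, H = LinearMap.ker (LinearMap.proj k : (Fin n → ℝ) →ₗ[ℝ] ℝ))}

/-- `L` (of codimension `d`) is in general position w.r.t. the collection `𝒜` of linear
hyperplanes: for every nonempty `B ⊆ 𝒜`,
`dim(∩_{H∈B}(H ∩ L)) = (n−d) − rank B` if `rank B ≤ n−d` and `= 0` otherwise,
where `rank B = n − dim(∩_{H∈B} H)`; both cases are expressed via truncated subtraction. -/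
def setArrGenPos (n d : ℕ) (𝒜 : Set (Submodule ℝ (Fin n → ℝ)))
    (L : Submodule ℝ (Fin n → ℝ)) : Prop :=
  ∀ B ⊆ 𝒜, B.Nonempty →
    Module.finrank ℝ ↥(sInf B ⊓ L)
      = (n - d) - (n - Module.finrank ℝ ↥(sInf B))

/-- The complement of the hyperplanes of the collection `𝒜` in `ℝ^n`. -/
def setArrComplement (n : ℕ) (𝒜 : Set (Submodule ℝ (Fin n → ℝ))) : Set (Fin n → ℝ) :=
  {x | ∀ H ∈ 𝒜, x ∉ H}

/-- The regions of `𝒜`: connected components of the complement of its hyperplanes. -/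
def setArrRegions (n : ℕ) (𝒜 : Set (Submodule ℝ (Fin n → ℝ))) :
    Set (Set (Fin n → ℝ)) :=
  {R | ∃ x ∈ setArrComplement n 𝒜,
    R = connectedComponentIn (setArrComplement n 𝒜) x}


open scoped Classical

noncomputable def SS (n a : ℕ) : ℕ := ∑ j ∈ Finset.range (n + 1), Bcoef n (a + 2 * j)

open Polynomial in
lemma Bcoef_succ_succ (n k : ℕ) :
    Bcoef (n + 1) (k + 1) = Bcoef n k + (2 * n + 1) * Bcoef n (k + 1) := by
  unfold Bcoef
  rw [Finset.prod_range_succ, mul_add, Polynomial.coeff_add, Polynomial.coeff_mul_X,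
    Polynomial.coeff_mul_C]
  ring

open Polynomial in
lemma Bcoef_succ_zero (n : ℕ) : Bcoef (n + 1) 0 = (2 * n + 1) * Bcoef n 0 := by
  unfold Bcoef
  rw [Finset.prod_range_succ, mul_add, Polynomial.coeff_add, Polynomial.coeff_mul_X_zero,
    Polynomial.coeff_mul_C]
  ring

open Polynomial in
lemma Bcoef_eq_zero (n k : ℕ) (h : n < k) : Bcoef n k = 0 := by
  unfold Bcoef
  apply Polynomial.coeff_eq_zero_of_natDegree_lt
  calc (∏ i ∈ Finset.range n, (X + C (2 * i + 1) : ℕ[X])).natDegree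
      ≤ ∑ i ∈ Finset.range n, (X + C (2 * i + 1) : ℕ[X]).natDegree :=
        Polynomial.natDegree_prod_le _ _
    _ ≤ ∑ _i ∈ Finset.range n, 1 := by
        apply Finset.sum_le_sum
        intro i _
        exact le_of_eq (Polynomial.natDegree_X_add_C _)
    _ = n := by simp
    _ < k := h

open Polynomial in
lemma Bcoef_self (n : ℕ) : Bcoef n n = 1 := by
  unfold Bcoef
  have hm : (∏ i ∈ Finset.range n, (X + C (2 * i + 1) : ℕ[X])).Monic :=
    Polynomial.monic_prod_of_monic _ _ (fun i _ => Polynomial.monic_X_add_C _)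
  have hdeg : (∏ i ∈ Finset.range n, (X + C (2 * i + 1) : ℕ[X])).natDegree = n := by
    rw [Polynomial.natDegree_prod_of_monic _ _ (fun i _ => Polynomial.monic_X_add_C _),
      Finset.sum_congr rfl (fun i _ => Polynomial.natDegree_X_add_C (2 * i + 1 : ℕ))]
    simp
  have := hm.coeff_natDegree
  rwa [hdeg] at this

lemma SS_succ_succ (n a : ℕ) :
    SS (n + 1) (a + 1) = SS n a + (2 * n + 1) * SS n (a + 1) := by
  unfold SS
  have h1 : ∀ j, Bcoef (n + 1) (a + 1 + 2 * j) =
      Bcoef n (a + 2 * j) + (2 * n + 1) * Bcoef n (a + 1 + 2 * j) := by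
    intro j
    have : a + 1 + 2 * j = (a + 2 * j) + 1 := by ring
    rw [this, Bcoef_succ_succ]
  rw [Finset.sum_congr rfl (fun j _ => h1 j), Finset.sum_add_distrib, ← Finset.mul_sum]
  rw [Finset.sum_range_succ (fun j => Bcoef n (a + 2 * j)),
    Finset.sum_range_succ (fun j => Bcoef n (a + 1 + 2 * j))]
  rw [Bcoef_eq_zero n (a + 2 * (n + 1)) (by omega), Bcoef_eq_zero n (a + 1 + 2 * (n + 1)) (by omega)]
  ring

lemma SS_succ_zero (n : ℕ) :
    SS (n + 1) 0 = SS n 1 + (2 * n + 1) * SS n 0 := by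
  unfold SS
  rw [Finset.sum_range_succ' (fun j => Bcoef (n + 1) (0 + 2 * j))]
  have h1 : ∀ j, Bcoef (n + 1) (0 + 2 * (j + 1)) =
      Bcoef n (1 + 2 * j) + (2 * n + 1) * Bcoef n (1 + 2 * j + 1) := by
    intro j
    have : 0 + 2 * (j + 1) = (1 + 2 * j) + 1 := by ring
    rw [this, Bcoef_succ_succ]
  rw [Finset.sum_congr rfl (fun j _ => h1 j), Finset.sum_add_distrib, ← Finset.mul_sum]
  have h0 : Bcoef (n + 1) (0 + 2 * 0) = (2 * n + 1) * Bcoef n 0 := by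
    simpa using Bcoef_succ_zero n
  rw [h0]
  have h2 : ∑ j ∈ Finset.range (n + 1), Bcoef n (0 + 2 * (j + 1)) + Bcoef n 0
      = ∑ j ∈ Finset.range (n + 1), Bcoef n (0 + 2 * j) := by
    rw [Finset.sum_range_succ' (fun j => Bcoef n (0 + 2 * j))]
    rw [Finset.sum_range_succ (fun j => Bcoef n (0 + 2 * (j + 1)))]
    rw [Bcoef_eq_zero n (0 + 2 * (n + 1)) (by omega)]
    simp
  have h3 : (2 * n + 1) * (∑ j ∈ Finset.range (n + 1), Bcoef n (0 + 2 * (j + 1)))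
      + (2 * n + 1) * Bcoef n 0
      = (2 * n + 1) * ∑ j ∈ Finset.range (n + 1), Bcoef n (0 + 2 * j) := by
    rw [← Nat.mul_add, h2]
  have h4 : ∀ j, Bcoef n (1 + 2 * j + 1) = Bcoef n (0 + 2 * (j + 1)) := by
    intro j; congr 1; ring
  rw [Finset.sum_congr rfl (fun j (_ : j ∈ Finset.range (n+1)) => h4 j)]
  omega

lemma Bcoef_one (k : ℕ) : Bcoef 1 k = if k ≤ 1 then 1 else 0 := by
  unfold Bcoef
  rw [Finset.prod_range_one]
  rcases k with _ | _ | k <;>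
    simp [Polynomial.coeff_add, Polynomial.coeff_X, Polynomial.coeff_C, Polynomial.coeff_one]

lemma SS_even_odd (n : ℕ) (hn : 1 ≤ n) : SS n 0 = SS n 1 := by
  induction n with
  | zero => omega
  | succ n ih =>
    rcases Nat.eq_or_lt_of_le hn with h | h
    · -- n + 1 = 1
      have : n = 0 := by omega
      subst this
      unfold SS
      rw [Finset.sum_range_succ, Finset.sum_range_succ, Finset.sum_range_zero,
        Finset.sum_range_succ, Finset.sum_range_succ, Finset.sum_range_zero]
      simp [Bcoef_one]
    · have hn1 : 1 ≤ n := by omega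
      rw [SS_succ_zero, SS_succ_succ, ih hn1]

lemma SS_top (n : ℕ) : SS n n = 1 := by
  unfold SS
  rw [Finset.sum_range_succ' (fun j => Bcoef n (n + 2 * j))]
  have : ∀ j, Bcoef n (n + 2 * (j + 1)) = 0 := fun j => Bcoef_eq_zero n _ (by omega)
  rw [Finset.sum_congr rfl (fun j _ => this j)]
  simp [Bcoef_self]

variable {V W : Type*} [AddCommGroup V] [Module ℝ V] [AddCommGroup W] [Module ℝ W]

/-- The set of sign vectors of the family `G` of linear functionals realized on `M`. -/
def SV (M : Submodule ℝ V) (G : Finset (V →ₗ[ℝ] ℝ)) : Set ((V →ₗ[ℝ] ℝ) → Bool) :=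
  {σ | (∀ f ∉ G, σ f = false) ∧
    ∃ x ∈ M, ∀ f ∈ G, f x ≠ 0 ∧ σ f = decide (0 < f x)}

lemma SV_finite (M : Submodule ℝ V) (G : Finset (V →ₗ[ℝ] ℝ)) : (SV M G).Finite := by
  have h : Set.InjOn (fun σ : (V →ₗ[ℝ] ℝ) → Bool => (fun f : ↥G => σ f)) (SV M G) := by
    intro σ₁ h₁ σ₂ h₂ h
    funext f
    by_cases hf : f ∈ G
    · exact congrFun h ⟨f, hf⟩
    · rw [h₁.1 f hf, h₂.1 f hf]
  exact Set.Finite.of_finite_image (Set.toFinite _) h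

lemma SV_empty (M : Submodule ℝ V) : SV M (∅ : Finset (V →ₗ[ℝ] ℝ)) = {fun _ => false} := by
  ext σ
  simp only [SV, Set.mem_setOf_eq, Finset.notMem_empty, Set.mem_singleton_iff]
  constructor
  · rintro ⟨h1, -⟩
    funext f
    exact h1 f (by simp)
  · rintro rfl
    exact ⟨fun _ _ => rfl, 0, M.zero_mem, fun f hf => absurd hf (by simp)⟩

lemma SV_bot (G : Finset (V →ₗ[ℝ] ℝ)) (hG : G.Nonempty) :
    SV (⊥ : Submodule ℝ V) G = ∅ := by
  ext σ
  simp only [SV, Set.mem_setOf_eq, Set.mem_empty_iff_false, iff_false, not_and]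
  rintro - ⟨x, hx, hreal⟩
  obtain ⟨f, hf⟩ := hG
  rw [Submodule.mem_bot] at hx
  exact (hreal f hf).1 (by rw [hx, map_zero])

/-- sign preservation under small perturbation -/
private lemma sign_pres {a b : ℝ} (h : |b| < |a|) : a + b ≠ 0 ∧ (0 < a + b ↔ 0 < a) := by
  rcases lt_trichotomy a 0 with ha | ha | ha
  · rw [abs_of_neg ha] at h
    have hb := (abs_lt.mp h).2
    constructor
    · nlinarith
    · constructor <;> intro <;> nlinarith
  · subst ha; simp only [abs_zero] at h; exact absurd h (by simp [abs_nonneg])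
  · rw [abs_of_pos ha] at h
    have hb := (abs_lt.mp h).1
    constructor
    · nlinarith
    · constructor <;> intro <;> nlinarith

lemma exists_perturb (G : Finset (V →ₗ[ℝ] ℝ)) (z v : V) (hz : ∀ f ∈ G, f z ≠ 0) :
    ∃ ε : ℝ, 0 < ε ∧ ∀ t : ℝ, |t| ≤ ε → ∀ f ∈ G,
      f (z + t • v) ≠ 0 ∧ (0 < f (z + t • v) ↔ 0 < f z) := by
  induction G using Finset.induction_on with
  | empty => exact ⟨1, one_pos, fun t _ f hf => absurd hf (by simp)⟩
  | @insert g G hg ih =>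
    obtain ⟨ε₀, hε₀, hΕ⟩ := ih (fun f hf => hz f (Finset.mem_insert_of_mem hf))
    have hgz : g z ≠ 0 := hz g (Finset.mem_insert_self _ _)
    have hεgpos : (0:ℝ) < |g z| / (2 * (|g v| + 1)) := by
      apply div_pos (abs_pos.mpr hgz)
      positivity
    refine ⟨min ε₀ (|g z| / (2 * (|g v| + 1))), lt_min hε₀ hεgpos, fun t ht f hf => ?_⟩
    rcases Finset.mem_insert.mp hf with rfl | hf
    · have h1 : |t * f v| < |f z| := by
        rw [abs_mul]
        calc |t| * |f v| ≤ (|f z| / (2 * (|f v| + 1))) * |f v| := by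
              apply mul_le_mul_of_nonneg_right _ (abs_nonneg _)
              exact le_trans ht (min_le_right _ _)
          _ ≤ |f z| / (2 * (|f v| + 1)) * (|f v| + 1) := by
              apply mul_le_mul_of_nonneg_left (by linarith [abs_nonneg (f v)])
              positivity
          _ = |f z| / 2 := by
              field_simp
          _ < |f z| := by
              have := abs_pos.mpr hgz
              linarith
      have h2 : f (z + t • v) = f z + t * f v := by
        rw [map_add, map_smul, smul_eq_mul]
      rw [h2, add_comm]
      have := sign_pres (a := f z) (b := t * f v) h1
      rwa [add_comm] at this
    · exact hΕ t (le_trans ht (min_le_left _ _)) f hf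

private lemma realize_shift {G : Finset (V →ₗ[ℝ] ℝ)} {τ : (V →ₗ[ℝ] ℝ) → Bool} {x v : V}
    {t : ℝ}
    (h2 : ∀ f ∈ G, f x ≠ 0 ∧ τ f = decide (0 < f x))
    (hΕ : ∀ f ∈ G, f (x + t • v) ≠ 0 ∧ (0 < f (x + t • v) ↔ 0 < f x)) :
    ∀ f ∈ G, f (x + t • v) ≠ 0 ∧ τ f = decide (0 < f (x + t • v)) := by
  intro f hf
  refine ⟨(hΕ f hf).1, ?_⟩
  rw [(h2 f hf).2, decide_eq_decide]
  exact (hΕ f hf).2.symm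

/-- Deletion-restriction for counting realizable sign vectors. -/
lemma SV_insert_card (M : Submodule ℝ V) (G : Finset (V →ₗ[ℝ] ℝ)) (g : V →ₗ[ℝ] ℝ)
    (hg : g ∉ G) (hgM : ∃ v ∈ M, g v ≠ 0) :
    (SV M (insert g G)).ncard
      = (SV M G).ncard + (SV (M ⊓ LinearMap.ker g) G).ncard := by
  obtain ⟨v, hvM, hgv⟩ := hgM
  set Bp : Set ((V →ₗ[ℝ] ℝ) → Bool) :=
    {τ | (∀ f ∉ G, τ f = false) ∧
      ∃ x ∈ M, (∀ f ∈ G, f x ≠ 0 ∧ τ f = decide (0 < f x)) ∧ 0 < g x} with hBp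
  set Bm : Set ((V →ₗ[ℝ] ℝ) → Bool) :=
    {τ | (∀ f ∉ G, τ f = false) ∧
      ∃ x ∈ M, (∀ f ∈ G, f x ≠ 0 ∧ τ f = decide (0 < f x)) ∧ g x < 0} with hBm
  set Ap : Set ((V →ₗ[ℝ] ℝ) → Bool) := {σ ∈ SV M (insert g G) | σ g = true} with hAp
  set Am : Set ((V →ₗ[ℝ] ℝ) → Bool) := {σ ∈ SV M (insert g G) | σ g = false} with hAm
  have hBunion : Bp ∪ Bm = SV M G := by
    apply Set.Subset.antisymm
    · rintro τ (⟨h1, x, hx, h2, -⟩ | ⟨h1, x, hx, h2, -⟩) <;> exact ⟨h1, x, hx, h2⟩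
    · rintro τ ⟨h1, x, hx, h2⟩
      obtain ⟨ε, hε, hΕ⟩ := exists_perturb G x v (fun f hf => (h2 f hf).1)
      rcases ne_or_eq (g x) 0 with hgx | hgx
      · rcases lt_or_gt_of_ne hgx with h | h
        · exact Or.inr ⟨h1, x, hx, h2, h⟩
        · exact Or.inl ⟨h1, x, hx, h2, h⟩
      · have hmem : x + ε • v ∈ M := M.add_mem hx (M.smul_mem _ hvM)
        have hmem' : x + (-ε) • v ∈ M := M.add_mem hx (M.smul_mem _ hvM)
        have habs : |ε| ≤ ε := le_of_eq (abs_of_pos hε)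
        have habs' : |(-ε)| ≤ ε := le_of_eq (by rw [abs_neg]; exact abs_of_pos hε)
        have hg1 : g (x + ε • v) = ε * g v := by
          rw [map_add, map_smul, smul_eq_mul, hgx, zero_add]
        have hg2 : g (x + (-ε) • v) = (-ε) * g v := by
          rw [map_add, map_smul, smul_eq_mul, hgx, zero_add]
        rcases lt_or_gt_of_ne hgv with h | h
        · refine Or.inl ⟨h1, x + (-ε) • v, hmem', realize_shift h2 (hΕ (-ε) habs'), ?_⟩
          rw [hg2]; nlinarith
        · refine Or.inl ⟨h1, x + ε • v, hmem, realize_shift h2 (hΕ ε habs), ?_⟩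
          rw [hg1]; positivity
  have hBinter : Bp ∩ Bm = SV (M ⊓ LinearMap.ker g) G := by
    apply Set.Subset.antisymm
    · rintro τ ⟨⟨h1, x, hx, h2, hgx⟩, ⟨-, y, hy, h3, hgy⟩⟩
      refine ⟨h1, ?_⟩
      have hxy : g x - g y > 0 := by linarith
      set t : ℝ := g x / (g x - g y) with hts
      have ht0 : 0 < t := div_pos hgx hxy
      have ht1 : t < 1 := by
        rw [hts, div_lt_one hxy]; linarith
      refine ⟨x + t • (y - x), ?_, ?_⟩
      · refine Submodule.mem_inf.mpr ⟨M.add_mem hx (M.smul_mem _ (M.sub_mem hy hx)), ?_⟩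
        rw [LinearMap.mem_ker, map_add, map_smul, map_sub, smul_eq_mul, hts]
        field_simp
        ring
      · intro f hf
        have hfz : f (x + t • (y - x)) = (1 - t) * f x + t * f y := by
          rw [map_add, map_smul, map_sub, smul_eq_mul]; ring
        obtain ⟨hfx, hτx⟩ := h2 f hf
        obtain ⟨hfy, hτy⟩ := h3 f hf
        rcases lt_or_gt_of_ne hfx with hx0 | hx0
        · have hy0 : f y < 0 := by
            rcases lt_or_gt_of_ne hfy with h | h
            · exact h
            · exfalso
              rw [hτx] at hτy
              rw [decide_eq_decide] at hτy
              exact absurd (hτy.mpr h) (not_lt.mpr (le_of_lt hx0))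
          have hlt : f (x + t • (y - x)) < 0 := by rw [hfz]; nlinarith
          refine ⟨ne_of_lt hlt, ?_⟩
          rw [hτx, decide_eq_decide]
          exact iff_of_false (not_lt.mpr (le_of_lt hx0)) (not_lt.mpr (le_of_lt hlt))
        · have hy0 : f y > 0 := by
            rcases lt_or_gt_of_ne hfy with h | h
            · exfalso
              rw [hτx] at hτy
              rw [decide_eq_decide] at hτy
              exact absurd (hτy.mp hx0) (not_lt.mpr (le_of_lt h))
            · exact h
          have hlt : 0 < f (x + t • (y - x)) := by rw [hfz]; nlinarith
          refine ⟨ne_of_gt hlt, ?_⟩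
          rw [hτx, decide_eq_decide]
          exact iff_of_true hx0 hlt
    · rintro τ ⟨h1, z, hz, h2⟩
      obtain ⟨hzM, hzg⟩ := Submodule.mem_inf.mp hz
      rw [LinearMap.mem_ker] at hzg
      obtain ⟨ε, hε, hΕ⟩ := exists_perturb G z v (fun f hf => (h2 f hf).1)
      have habs : |ε| ≤ ε := le_of_eq (abs_of_pos hε)
      have habs' : |(-ε)| ≤ ε := le_of_eq (by rw [abs_neg]; exact abs_of_pos hε)
      have hm1 : z + ε • v ∈ M := M.add_mem hzM (M.smul_mem _ hvM)
      have hm2 : z + (-ε) • v ∈ M := M.add_mem hzM (M.smul_mem _ hvM)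
      have hg1 : g (z + ε • v) = ε * g v := by
        rw [map_add, map_smul, smul_eq_mul, hzg, zero_add]
      have hg2 : g (z + (-ε) • v) = (-ε) * g v := by
        rw [map_add, map_smul, smul_eq_mul, hzg, zero_add]
      rcases lt_or_gt_of_ne hgv with h | h
      · constructor
        · refine ⟨h1, z + (-ε) • v, hm2, realize_shift h2 (hΕ (-ε) habs'), ?_⟩
          rw [hg2]; nlinarith
        · refine ⟨h1, z + ε • v, hm1, realize_shift h2 (hΕ ε habs), ?_⟩
          rw [hg1]; nlinarith
      · constructor
        · refine ⟨h1, z + ε • v, hm1, realize_shift h2 (hΕ ε habs), ?_⟩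
          rw [hg1]; positivity
        · refine ⟨h1, z + (-ε) • v, hm2, realize_shift h2 (hΕ (-ε) habs'), ?_⟩
          rw [hg2]; nlinarith
  have hApimg : (fun σ => Function.update σ g false) '' Ap = Bp := by
    apply Set.Subset.antisymm
    · rintro τ ⟨σ, ⟨hσ, hσg⟩, rfl⟩
      obtain ⟨h1, x, hx, h2⟩ := hσ
      obtain ⟨hgx, hsg⟩ := h2 g (Finset.mem_insert_self _ _)
      have hpos : (0 : ℝ) < g x := by
        rw [hσg] at hsg
        exact of_decide_eq_true hsg.symm
      refine ⟨?_, x, hx, ?_, hpos⟩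
      · intro f hf
        rcases eq_or_ne f g with rfl | hne
        · simp
        · show Function.update σ g false f = false
          rw [Function.update_of_ne hne]; exact h1 f (by simp [hf, hne])
      · intro f hf
        have hne : f ≠ g := fun h => hg (h ▸ hf)
        show f x ≠ 0 ∧ Function.update σ g false f = decide (0 < f x)
        rw [Function.update_of_ne hne]
        exact h2 f (Finset.mem_insert_of_mem hf)
    · rintro τ ⟨h1, x, hx, h2, hgx⟩
      refine ⟨Function.update τ g true, ⟨⟨?_, x, hx, ?_⟩, by simp⟩, ?_⟩
      · intro f hf
        simp only [Finset.mem_insert, not_or] at hf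
        rw [Function.update_of_ne hf.1]
        exact h1 f hf.2
      · intro f hf
        rcases Finset.mem_insert.mp hf with rfl | hf
        · refine ⟨ne_of_gt hgx, ?_⟩
          simp only [Function.update_self]
          exact (decide_eq_true hgx).symm
        · have hne : f ≠ g := fun h => hg (h ▸ hf)
          rw [Function.update_of_ne hne]
          exact h2 f hf
      · funext f
        rcases eq_or_ne f g with rfl | hne
        · simp [h1 f hg]
        · simp [Function.update_of_ne hne]
  have hAmimg : (fun σ => Function.update σ g false) '' Am = Bm := by
    apply Set.Subset.antisymm
    · rintro τ ⟨σ, ⟨hσ, hσg⟩, rfl⟩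
      obtain ⟨h1, x, hx, h2⟩ := hσ
      obtain ⟨hgx, hsg⟩ := h2 g (Finset.mem_insert_self _ _)
      have hneg : g x < 0 := by
        rw [hσg] at hsg
        have : ¬ (0 < g x) := of_decide_eq_false hsg.symm
        exact lt_of_le_of_ne (not_lt.mp this) hgx
      refine ⟨?_, x, hx, ?_, hneg⟩
      · intro f hf
        rcases eq_or_ne f g with rfl | hne
        · simp
        · show Function.update σ g false f = false
          rw [Function.update_of_ne hne]; exact h1 f (by simp [hf, hne])
      · intro f hf
        have hne : f ≠ g := fun h => hg (h ▸ hf)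
        show f x ≠ 0 ∧ Function.update σ g false f = decide (0 < f x)
        rw [Function.update_of_ne hne]
        exact h2 f (Finset.mem_insert_of_mem hf)
    · rintro τ ⟨h1, x, hx, h2, hgx⟩
      refine ⟨Function.update τ g false, ⟨⟨?_, x, hx, ?_⟩, by simp⟩, ?_⟩
      · intro f hf
        simp only [Finset.mem_insert, not_or] at hf
        rw [Function.update_of_ne hf.1]
        exact h1 f hf.2
      · intro f hf
        rcases Finset.mem_insert.mp hf with rfl | hf
        · refine ⟨ne_of_lt hgx, ?_⟩
          simp only [Function.update_self]
          exact (decide_eq_false (not_lt.mpr (le_of_lt hgx))).symm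
        · have hne : f ≠ g := fun h => hg (h ▸ hf)
          rw [Function.update_of_ne hne]
          exact h2 f hf
      · funext f
        rcases eq_or_ne f g with rfl | hne
        · simp [h1 f hg]
        · simp [Function.update_of_ne hne]
  have hinjAp : Set.InjOn (fun σ => Function.update σ g false) Ap := by
    intro σ₁ hσ₁ σ₂ hσ₂ h
    funext f
    rcases eq_or_ne f g with rfl | hne
    · rw [hσ₁.2, hσ₂.2]
    · have := congrFun h f
      simpa [Function.update_of_ne hne] using this
  have hinjAm : Set.InjOn (fun σ => Function.update σ g false) Am := by
    intro σ₁ hσ₁ σ₂ hσ₂ h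
    funext f
    rcases eq_or_ne f g with rfl | hne
    · rw [hσ₁.2, hσ₂.2]
    · have := congrFun h f
      simpa [Function.update_of_ne hne] using this
  have hsplit : SV M (insert g G) = Ap ∪ Am := by
    apply Set.Subset.antisymm
    · intro σ hσ
      rcases Bool.eq_false_or_eq_true (σ g) with h | h
      · exact Or.inl ⟨hσ, h⟩
      · exact Or.inr ⟨hσ, h⟩
    · rintro σ (⟨h, -⟩ | ⟨h, -⟩) <;> exact h
  have hdisjA : Disjoint Ap Am := by
    rw [Set.disjoint_left]
    rintro σ ⟨-, h1⟩ ⟨-, h2⟩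
    rw [h1] at h2
    exact absurd h2 (by decide)
  have hfinAp : Ap.Finite := (SV_finite M (insert g G)).subset (fun σ h => h.1)
  have hfinAm : Am.Finite := (SV_finite M (insert g G)).subset (fun σ h => h.1)
  have hfinBp : Bp.Finite := hApimg ▸ hfinAp.image _
  have hfinBm : Bm.Finite := hAmimg ▸ hfinAm.image _
  calc (SV M (insert g G)).ncard = (Ap ∪ Am).ncard := by rw [hsplit]
    _ = Ap.ncard + Am.ncard := Set.ncard_union_eq hdisjA hfinAp hfinAm
    _ = Bp.ncard + Bm.ncard := by
        rw [← hApimg, ← hAmimg, Set.ncard_image_of_injOn hinjAp, Set.ncard_image_of_injOn hinjAm]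
    _ = (Bp ∪ Bm).ncard + (Bp ∩ Bm).ncard := by
        rw [Set.ncard_union_add_ncard_inter _ _ hfinBp hfinBm]
    _ = (SV M G).ncard + (SV (M ⊓ LinearMap.ker g) G).ncard := by rw [hBunion, hBinter]

private lemma decide_mul_pos {c a b : ℝ} (hc : c ≠ 0) (ha : a ≠ 0) (hb : b ≠ 0)
    (hab : decide (0 < a) = decide (0 < b)) : decide (0 < c * a) = decide (0 < c * b) := by
  rw [decide_eq_decide] at hab ⊢
  rcases lt_or_gt_of_ne ha with ha' | ha' <;> rcases lt_or_gt_of_ne hb with hb' | hb' <;>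
    rcases lt_or_gt_of_ne hc with hc' | hc'
  · constructor <;> intro <;> nlinarith
  · constructor <;> intro <;> nlinarith
  · exact absurd (hab.mpr hb') (not_lt.mpr (le_of_lt ha'))
  · exact absurd (hab.mpr hb') (not_lt.mpr (le_of_lt ha'))
  · exact absurd (hab.mp ha') (not_lt.mpr (le_of_lt hb'))
  · exact absurd (hab.mp ha') (not_lt.mpr (le_of_lt hb'))
  · constructor <;> intro <;> nlinarith
  · constructor <;> intro <;> nlinarith

/-- Adding a functional proportional (on `M`) to an existing one does not change the count. -/
lemma SV_insert_redundant (M : Submodule ℝ V) (G : Finset (V →ₗ[ℝ] ℝ)) (g : V →ₗ[ℝ] ℝ)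
    (hg : g ∉ G) (f₀ : V →ₗ[ℝ] ℝ) (hf₀ : f₀ ∈ G) (c : ℝ) (hc : c ≠ 0)
    (hrel : ∀ x ∈ M, g x = c * f₀ x) :
    (SV M (insert g G)).ncard = (SV M G).ncard := by
  have himg : (fun σ => Function.update σ g false) '' SV M (insert g G) = SV M G := by
    apply Set.Subset.antisymm
    · rintro τ ⟨σ, ⟨h1, x, hx, h2⟩, rfl⟩
      constructor
      · intro f hf
        rcases eq_or_ne f g with rfl | hne
        · simp
        · show Function.update σ g false f = false
          rw [Function.update_of_ne hne]
          exact h1 f (by simp [hf, hne])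
      · refine ⟨x, hx, fun f hf => ?_⟩
        have hne : f ≠ g := fun h => hg (h ▸ hf)
        show f x ≠ 0 ∧ Function.update σ g false f = decide (0 < f x)
        rw [Function.update_of_ne hne]
        exact h2 f (Finset.mem_insert_of_mem hf)
    · rintro τ ⟨h1, x, hx, h2⟩
      refine ⟨Function.update τ g (decide (0 < g x)), ⟨?_, x, hx, ?_⟩, ?_⟩
      · intro f hf
        simp only [Finset.mem_insert, not_or] at hf
        rw [Function.update_of_ne hf.1]
        exact h1 f hf.2
      · intro f hf
        rcases Finset.mem_insert.mp hf with rfl | hf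
        · have : f x = c * f₀ x := hrel x hx
          refine ⟨by rw [this]; exact mul_ne_zero hc (h2 f₀ hf₀).1, by simp⟩
        · have hne : f ≠ g := fun h => hg (h ▸ hf)
          rw [Function.update_of_ne hne]
          exact h2 f hf
      · funext f
        rcases eq_or_ne f g with rfl | hne
        · simp [h1 f hg]
        · simp [Function.update_of_ne hne]
  have hinj : Set.InjOn (fun σ => Function.update σ g false) (SV M (insert g G)) := by
    rintro σ₁ ⟨h11, x₁, hx₁, h21⟩ σ₂ ⟨h12, x₂, hx₂, h22⟩ h
    have hagree : ∀ f, f ≠ g → σ₁ f = σ₂ f := by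
      intro f hne
      have := congrFun h f
      simpa [Function.update_of_ne hne] using this
    funext f
    rcases eq_or_ne f g with rfl | hne
    · -- determined by the sign at f₀
      have e1 := (h21 f (Finset.mem_insert_self _ _)).2
      have e2 := (h22 f (Finset.mem_insert_self _ _)).2
      have hf1 := h21 f₀ (Finset.mem_insert_of_mem hf₀)
      have hf2 := h22 f₀ (Finset.mem_insert_of_mem hf₀)
      have hff : f₀ ≠ f := by
        intro hcon
        exact hg (hcon ▸ hf₀)
      have hsame : decide (0 < f₀ x₁) = decide (0 < f₀ x₂) := by
        rw [← hf1.2, ← hf2.2]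
        exact hagree f₀ hff
      rw [e1, e2, hrel x₁ hx₁, hrel x₂ hx₂]
      exact decide_mul_pos hc hf1.1 hf2.1 hsame
    · exact hagree f hne
  rw [← himg, Set.ncard_image_of_injOn hinj]

lemma SV_union_redundant (M : Submodule ℝ V) (base T : Finset (V →ₗ[ℝ] ℝ))
    (h : ∀ g' ∈ T, g' ∉ base ∧ ∃ f ∈ base, ∃ c : ℝ, c ≠ 0 ∧ ∀ x ∈ M, g' x = c * f x) :
    (SV M (base ∪ T)).ncard = (SV M base).ncard := by
  induction T using Finset.induction_on with
  | empty => rw [Finset.union_empty]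
  | @insert g T hgT ih =>
    have h1 := h g (Finset.mem_insert_self _ _)
    have hg : g ∉ base ∪ T := by
      rw [Finset.mem_union]
      push_neg
      exact ⟨h1.1, hgT⟩
    obtain ⟨f, hf, c, hc, hrel⟩ := h1.2
    rw [Finset.union_insert,
      SV_insert_redundant M (base ∪ T) g hg f (Finset.mem_union_left _ hf) c hc hrel]
    exact ih (fun g' hg' => h g' (Finset.mem_insert_of_mem hg'))

lemma SV_union_chain (L : Submodule ℝ V) (base T : Finset (V →ₗ[ℝ] ℝ))
    (hdisj : ∀ g ∈ T, g ∉ base)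
    (hnz : ∀ g ∈ T, ∃ v ∈ L, g v ≠ 0)
    (hred : ∀ g ∈ T, ∀ g' ∈ T, g' ≠ g → ∃ f ∈ base, ∃ c : ℝ, c ≠ 0 ∧
      ∀ x ∈ (L ⊓ LinearMap.ker g : Submodule ℝ V), g' x = c * f x) :
    (SV L (base ∪ T)).ncard
      = (SV L base).ncard + ∑ g ∈ T, (SV (L ⊓ LinearMap.ker g) base).ncard := by
  induction T using Finset.induction_on with
  | empty => simp
  | @insert g T hgT ih =>
    have hg' : g ∉ base ∪ T := by
      rw [Finset.mem_union]
      push_neg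
      exact ⟨hdisj g (Finset.mem_insert_self _ _), hgT⟩
    have hv : ∃ v ∈ L, g v ≠ 0 := hnz g (Finset.mem_insert_self _ _)
    rw [Finset.union_insert, SV_insert_card L (base ∪ T) g hg' hv]
    rw [SV_union_redundant (L ⊓ LinearMap.ker g) base T (fun g' hg'T =>
      ⟨hdisj g' (Finset.mem_insert_of_mem hg'T),
        hred g (Finset.mem_insert_self _ _) g' (Finset.mem_insert_of_mem hg'T)
          (fun hcon => hgT (hcon ▸ hg'T))⟩)]
    rw [ih (fun g hg => hdisj g (Finset.mem_insert_of_mem hg))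
      (fun g hg => hnz g (Finset.mem_insert_of_mem hg))
      (fun g hg g' hg' hne => hred g (Finset.mem_insert_of_mem hg) g'
        (Finset.mem_insert_of_mem hg') hne)]
    rw [Finset.sum_insert hgT]
    omega

/-- Counting sign vectors of pulled-back functionals. -/
lemma SV_comp_card (π : V →ₗ[ℝ] W) (hπ : Function.Surjective π) (M : Submodule ℝ V)
    (G' : Finset (W →ₗ[ℝ] ℝ)) :
    (SV M (G'.image (fun f' => f'.comp π))).ncard = (SV (M.map π) G').ncard := by
  set j : (W →ₗ[ℝ] ℝ) → (V →ₗ[ℝ] ℝ) := fun f' => f'.comp π with hjdef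
  have hj : Function.Injective j := by
    intro a b h
    ext w
    obtain ⟨v, rfl⟩ := hπ w
    exact LinearMap.congr_fun h v
  set Ψ : ((W →ₗ[ℝ] ℝ) → Bool) → ((V →ₗ[ℝ] ℝ) → Bool) :=
    fun σ' => Function.extend j σ' (fun _ => false) with hΨdef
  have hΨj : ∀ σ' f', Ψ σ' (j f') = σ' f' := fun σ' f' => hj.extend_apply σ' _ f'
  have hΨout : ∀ σ' f, f ∉ Set.range j → Ψ σ' f = false := by
    intro σ' f hf
    exact Function.extend_apply' σ' _ f (by simpa [Set.mem_range] using hf)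
  have himg : Ψ '' SV (M.map π) G' = SV M (G'.image j) := by
    apply Set.Subset.antisymm
    · rintro σ ⟨σ', ⟨h1, y, hy, h2⟩, rfl⟩
      obtain ⟨x, hx, rfl⟩ := hy
      constructor
      · intro f hf
        by_cases hrange : f ∈ Set.range j
        · obtain ⟨f', rfl⟩ := hrange
          rw [hΨj]
          apply h1
          intro hcon
          exact hf (Finset.mem_image_of_mem j hcon)
        · exact hΨout σ' f hrange
      · refine ⟨x, hx, fun f hf => ?_⟩
        obtain ⟨f', hf', rfl⟩ := Finset.mem_image.mp hf
        have : (j f') x = f' (π x) := rfl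
        rw [this, hΨj]
        exact h2 f' hf'
    · rintro σ ⟨h1, x, hx, h2⟩
      refine ⟨fun f' => σ (j f'), ⟨?_, π x, Submodule.mem_map_of_mem hx, ?_⟩, ?_⟩
      · intro f' hf'
        apply h1
        intro hcon
        obtain ⟨a, ha, hae⟩ := Finset.mem_image.mp hcon
        exact hf' (hj hae ▸ ha)
      · intro f' hf'
        have := h2 (j f') (Finset.mem_image_of_mem j hf')
        exact this
      · funext f
        by_cases hrange : f ∈ Set.range j
        · obtain ⟨f', rfl⟩ := hrange
          rw [hΨj]
        · rw [hΨout _ f hrange]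
          refine (h1 f ?_).symm
          intro hcon
          obtain ⟨a, -, hae⟩ := Finset.mem_image.mp hcon
          exact hrange ⟨a, hae⟩
  have hinj : Set.InjOn Ψ (SV (M.map π) G') := by
    intro σ₁ h₁ σ₂ h₂ h
    funext f'
    have := congrFun h (j f')
    rwa [hΨj, hΨj] at this
  rw [← himg, Set.ncard_image_of_injOn hinj]

section FinrankHelpers

variable [FiniteDimensional ℝ V] [FiniteDimensional ℝ W]

lemma finrank_inf_eq (M : Submodule ℝ V) (N : Submodule ℝ V) :
    Module.finrank ℝ ↥(M ⊓ N) = Module.finrank ℝ ↥(N ⊓ M) := by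
  rw [inf_comm]

/-- if `g` does not vanish on `U` then intersecting with its kernel drops the rank by one. -/
lemma finrank_inf_ker (U : Submodule ℝ V) (g : V →ₗ[ℝ] ℝ) (h : ∃ w ∈ U, g w ≠ 0) :
    Module.finrank ℝ ↥(U ⊓ LinearMap.ker g) + 1 = Module.finrank ℝ ↥U := by
  obtain ⟨w, hwU, hgw⟩ := h
  set φ := g.domRestrict U with hφ
  have hrange : LinearMap.range φ = ⊤ := by
    rw [LinearMap.range_eq_top]
    intro r
    refine ⟨(r / g w) • ⟨w, hwU⟩, ?_⟩
    show g ((r / g w) • w) = r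
    rw [map_smul, smul_eq_mul]
    field_simp
  have hker : LinearMap.ker φ = Submodule.comap U.subtype (U ⊓ LinearMap.ker g) := by
    rw [hφ, LinearMap.ker_domRestrict, Submodule.comap_inf]
    have : Submodule.comap U.subtype U = ⊤ := by
      rw [Submodule.comap_subtype_eq_top]
    rw [this, top_inf_eq]
  have h1 := LinearMap.finrank_range_add_finrank_ker φ
  rw [hrange, hker] at h1
  have h2 : Module.finrank ℝ ↥(Submodule.comap U.subtype (U ⊓ LinearMap.ker g))
      = Module.finrank ℝ ↥(U ⊓ LinearMap.ker g) :=
    (Submodule.comapSubtypeEquivOfLe inf_le_left).finrank_eq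
  rw [h2] at h1
  simpa [Module.finrank_self, add_comm] using h1

lemma finrank_map_add (π : V →ₗ[ℝ] W) (L : Submodule ℝ V) :
    Module.finrank ℝ ↥(L.map π) + Module.finrank ℝ ↥(L ⊓ LinearMap.ker π)
      = Module.finrank ℝ ↥L := by
  set φ := π.domRestrict L with hφ
  have h1 := LinearMap.finrank_range_add_finrank_ker φ
  have hrange : LinearMap.range φ = L.map π := LinearMap.range_domRestrict L π
  have hker : LinearMap.ker φ = Submodule.comap L.subtype (L ⊓ LinearMap.ker π) := by
    rw [hφ, LinearMap.ker_domRestrict, Submodule.comap_inf]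
    have : Submodule.comap L.subtype L = ⊤ := by
      rw [Submodule.comap_subtype_eq_top]
    rw [this, top_inf_eq]
  rw [hrange, hker,
    (Submodule.comapSubtypeEquivOfLe (inf_le_left :
      L ⊓ LinearMap.ker π ≤ L)).finrank_eq] at h1
  exact h1

lemma finrank_map_of_inj (π : V →ₗ[ℝ] W) (L : Submodule ℝ V)
    (h : L ⊓ LinearMap.ker π = ⊥) :
    Module.finrank ℝ ↥(L.map π) = Module.finrank ℝ ↥L := by
  have := finrank_map_add π L
  rw [h] at this
  simpa using this

lemma finrank_comap_surj (π : V →ₗ[ℝ] W) (hπ : Function.Surjective π)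
    (U : Submodule ℝ W) :
    Module.finrank ℝ ↥(U.comap π)
      = Module.finrank ℝ ↥U + Module.finrank ℝ ↥(LinearMap.ker π) := by
  have hmap : (U.comap π).map π = U := by
    rw [Submodule.map_comap_eq, LinearMap.range_eq_top.mpr hπ, top_inf_eq]
  have hker : (U.comap π) ⊓ LinearMap.ker π = LinearMap.ker π := by
    rw [inf_eq_right]
    intro x hx
    rw [LinearMap.mem_ker] at hx
    show π x ∈ U
    rw [hx]
    exact U.zero_mem
  have := finrank_map_add π (U.comap π)
  rw [hmap, hker] at this
  omega

lemma sInf_image_comap (π : V →ₗ[ℝ] W) (B : Set (Submodule ℝ W)) (hB : B.Nonempty) :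
    sInf ((fun H => H.comap π) '' B) = (sInf B).comap π := by
  apply le_antisymm
  · intro x hx
    rw [Submodule.mem_comap, Submodule.mem_sInf]
    intro H hH
    rw [Submodule.mem_sInf] at hx
    exact hx _ (Set.mem_image_of_mem _ hH)
  · intro x hx
    rw [Submodule.mem_sInf]
    rintro p ⟨H, hH, rfl⟩
    rw [Submodule.mem_comap] at hx ⊢
    rw [Submodule.mem_sInf] at hx
    exact hx H hH

lemma inf_map_comm (π : V →ₗ[ℝ] W) (L : Submodule ℝ V) (U : Submodule ℝ W) :
    U ⊓ L.map π = ((L ⊓ U.comap π).map π) := by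
  ext y
  constructor
  · rintro ⟨hyU, x, hxL, rfl⟩
    exact ⟨x, ⟨hxL, hyU⟩, rfl⟩
  · rintro ⟨x, ⟨hxL, hxU⟩, rfl⟩
    exact ⟨hxU, x, hxL, rfl⟩

end FinrankHelpers

section Concrete

/-- projection functional -/
def pj {n : ℕ} (i : Fin n) : (Fin n → ℝ) →ₗ[ℝ] ℝ := LinearMap.proj i

@[simp] lemma pj_apply {n : ℕ} (i : Fin n) (x : Fin n → ℝ) : pj i x = x i := rfl

/-- The functionals of the `B_n` arrangement. -/
noncomputable def Gb (n : ℕ) : Finset ((Fin n → ℝ) →ₗ[ℝ] ℝ) :=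
  (((Finset.univ : Finset (Fin n × Fin n)).filter fun p => p.1 < p.2).image
      fun p => pj p.1 - pj p.2)
  ∪ (((Finset.univ : Finset (Fin n × Fin n)).filter fun p => p.1 < p.2).image
      fun p => pj p.1 + pj p.2)
  ∪ ((Finset.univ : Finset (Fin n)).image fun k => pj k)

lemma mem_Gb {n : ℕ} (f : (Fin n → ℝ) →ₗ[ℝ] ℝ) :
    f ∈ Gb n ↔ (∃ i j : Fin n, i < j ∧ f = pj i - pj j) ∨
      (∃ i j : Fin n, i < j ∧ f = pj i + pj j) ∨ (∃ k : Fin n, f = pj k) := by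
  unfold Gb
  simp only [Finset.mem_union, Finset.mem_image, Finset.mem_filter, Finset.mem_univ, true_and]
  constructor
  · rintro ((⟨p, hp, rfl⟩ | ⟨p, hp, rfl⟩) | ⟨k, rfl⟩)
    · exact Or.inl ⟨p.1, p.2, hp, rfl⟩
    · exact Or.inr (Or.inl ⟨p.1, p.2, hp, rfl⟩)
    · exact Or.inr (Or.inr ⟨k, rfl⟩)
  · rintro (⟨i, j, hij, rfl⟩ | ⟨i, j, hij, rfl⟩ | ⟨k, rfl⟩)
    · exact Or.inl (Or.inl ⟨(i, j), hij, rfl⟩)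
    · exact Or.inl (Or.inr ⟨(i, j), hij, rfl⟩)
    · exact Or.inr ⟨k, rfl⟩

lemma arrangementB_eq_ker (n : ℕ) :
    arrangementB n = {H | ∃ f ∈ Gb n, H = LinearMap.ker f} := by
  ext H
  simp only [arrangementB, Set.mem_setOf_eq]
  constructor
  · rintro (⟨i, j, hij, rfl⟩ | ⟨i, j, hij, rfl⟩ | ⟨k, rfl⟩)
    · exact ⟨pj i - pj j, (mem_Gb _).mpr (Or.inl ⟨i, j, hij, rfl⟩), rfl⟩
    · exact ⟨pj i + pj j, (mem_Gb _).mpr (Or.inr (Or.inl ⟨i, j, hij, rfl⟩)), rfl⟩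
    · exact ⟨pj k, (mem_Gb _).mpr (Or.inr (Or.inr ⟨k, rfl⟩)), rfl⟩
  · rintro ⟨f, hf, rfl⟩
    rcases (mem_Gb f).mp hf with ⟨i, j, hij, rfl⟩ | ⟨i, j, hij, rfl⟩ | ⟨k, rfl⟩
    · exact Or.inl ⟨i, j, hij, rfl⟩
    · exact Or.inr (Or.inl ⟨i, j, hij, rfl⟩)
    · exact Or.inr (Or.inr ⟨k, rfl⟩)

lemma comp_eq (n : ℕ) :
    setArrComplement n (arrangementB n) = {x | ∀ f ∈ Gb n, f x ≠ 0} := by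
  ext x
  simp only [setArrComplement, Set.mem_setOf_eq]
  constructor
  · intro h f hf hfx
    have hker : LinearMap.ker f ∈ arrangementB n := by
      rw [arrangementB_eq_ker]
      exact ⟨f, hf, rfl⟩
    exact h (LinearMap.ker f) hker (LinearMap.mem_ker.mpr hfx)
  · intro h H hH hxH
    rw [arrangementB_eq_ker] at hH
    obtain ⟨f, hf, rfl⟩ := hH
    exact h f hf (LinearMap.mem_ker.mp hxH)

lemma single_eval {n : ℕ} (i j : Fin n) (r : ℝ) :
    pj i (Pi.single j r) = if i = j then r else 0 := by
  rw [pj_apply, Pi.single_apply]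

lemma Gb_exists_one {n : ℕ} {f : (Fin n → ℝ) →ₗ[ℝ] ℝ} (hf : f ∈ Gb n) :
    ∃ x, f x = 1 := by
  rcases (mem_Gb f).mp hf with ⟨i, j, hij, rfl⟩ | ⟨i, j, hij, rfl⟩ | ⟨k, rfl⟩
  · refine ⟨Pi.single i 1, ?_⟩
    rw [LinearMap.sub_apply]
    rw [show (pj i) (Pi.single i 1) = 1 by simp [single_eval],
      show (pj j) (Pi.single i 1) = 0 by simp [single_eval, (ne_of_lt hij).symm]]
    norm_num
  · refine ⟨Pi.single i 1, ?_⟩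
    rw [LinearMap.add_apply]
    rw [show (pj i) (Pi.single i 1) = 1 by simp [single_eval],
      show (pj j) (Pi.single i 1) = 0 by simp [single_eval, (ne_of_lt hij).symm]]
    norm_num
  · exact ⟨Pi.single k 1, by simp [single_eval]⟩

lemma Gb_finrank_ker {n : ℕ} {f : (Fin n → ℝ) →ₗ[ℝ] ℝ} (hf : f ∈ Gb n) :
    Module.finrank ℝ ↥(LinearMap.ker f) + 1 = n := by
  obtain ⟨x, hx⟩ := Gb_exists_one hf
  have := finrank_inf_ker (⊤ : Submodule ℝ (Fin n → ℝ)) f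
    ⟨x, Submodule.mem_top, by rw [hx]; exact one_ne_zero⟩
  rw [top_inf_eq, finrank_top] at this
  rw [this]
  simp [Module.finrank_fintype_fun_eq_card]

end Concrete

section Projection

/-- the projection forgetting the last coordinate -/
noncomputable def πmap (n : ℕ) : (Fin (n + 1) → ℝ) →ₗ[ℝ] (Fin n → ℝ) :=
  LinearMap.funLeft ℝ ℝ Fin.castSucc

lemma πmap_surj (n : ℕ) : Function.Surjective (πmap n) :=
  LinearMap.funLeft_surjective_of_injective ℝ ℝ _ (Fin.castSucc_injective n)

@[simp] lemma πmap_apply (n : ℕ) (x : Fin (n + 1) → ℝ) (i : Fin n) :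
    πmap n x i = x i.castSucc := rfl

lemma pj_comp (n : ℕ) (i : Fin n) : (pj i).comp (πmap n) = pj i.castSucc := by
  ext x
  rfl

lemma mem_ker_πmap {n : ℕ} {x : Fin (n + 1) → ℝ} :
    x ∈ LinearMap.ker (πmap n) ↔ ∀ i : Fin n, x i.castSucc = 0 := by
  rw [LinearMap.mem_ker, funext_iff]
  simp

lemma single_last_mem_ker (n : ℕ) (r : ℝ) :
    Pi.single (Fin.last n) r ∈ LinearMap.ker (πmap n) := by
  rw [mem_ker_πmap]
  intro i
  rw [Pi.single_apply, if_neg (Fin.ne_of_lt (Fin.castSucc_lt_last i))]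

lemma eq_zero_of_ker_πmap {n : ℕ} {x : Fin (n + 1) → ℝ}
    (h1 : ∀ i : Fin n, x i.castSucc = 0) (h2 : x (Fin.last n) = 0) : x = 0 := by
  funext i
  rcases Fin.eq_castSucc_or_eq_last i with ⟨j, rfl⟩ | rfl
  · exact h1 j
  · exact h2

lemma finrank_ker_πmap (n : ℕ) :
    Module.finrank ℝ ↥(LinearMap.ker (πmap n)) = 1 := by
  set φ : ↥(LinearMap.ker (πmap n)) →ₗ[ℝ] ℝ :=
    (pj (Fin.last n)).domRestrict (LinearMap.ker (πmap n)) with hφ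
  have hinj : Function.Injective φ := by
    rw [← LinearMap.ker_eq_bot, eq_bot_iff]
    rintro ⟨x, hx⟩ hz
    rw [LinearMap.mem_ker] at hz
    have hx' := mem_ker_πmap.mp hx
    have : x = 0 := eq_zero_of_ker_πmap hx' hz
    rw [Submodule.mem_bot]
    exact Subtype.ext this
  have hsurj : Function.Surjective φ := by
    intro r
    exact ⟨⟨Pi.single (Fin.last n) r, single_last_mem_ker n r⟩, by
      show pj (Fin.last n) (Pi.single (Fin.last n) r) = r
      simp [single_eval]⟩
  have := LinearEquiv.finrank_eq (LinearEquiv.ofBijective φ ⟨hinj, hsurj⟩)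
  simpa using this

/-- The new functionals: those involving the last coordinate. -/
noncomputable def NewF (n : ℕ) : Finset ((Fin (n + 1) → ℝ) →ₗ[ℝ] ℝ) :=
  ((Finset.univ : Finset (Fin n)).image fun i => pj i.castSucc - pj (Fin.last n))
  ∪ ((Finset.univ : Finset (Fin n)).image fun i => pj i.castSucc + pj (Fin.last n))
  ∪ {pj (Fin.last n)}

lemma mem_NewF {n : ℕ} (g : (Fin (n + 1) → ℝ) →ₗ[ℝ] ℝ) :
    g ∈ NewF n ↔ (∃ i : Fin n, g = pj i.castSucc - pj (Fin.last n)) ∨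
      (∃ i : Fin n, g = pj i.castSucc + pj (Fin.last n)) ∨ g = pj (Fin.last n) := by
  unfold NewF
  simp only [Finset.mem_union, Finset.mem_image, Finset.mem_univ, true_and,
    Finset.mem_singleton]
  constructor
  · rintro ((⟨i, rfl⟩ | ⟨i, rfl⟩) | rfl)
    · exact Or.inl ⟨i, rfl⟩
    · exact Or.inr (Or.inl ⟨i, rfl⟩)
    · exact Or.inr (Or.inr rfl)
  · rintro (⟨i, rfl⟩ | ⟨i, rfl⟩ | rfl)
    · exact Or.inl (Or.inl ⟨i, rfl⟩)
    · exact Or.inl (Or.inr ⟨i, rfl⟩)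
    · exact Or.inr rfl

lemma NewF_subset_Gb {n : ℕ} : ∀ g ∈ NewF n, g ∈ Gb (n + 1) := by
  intro g hg
  rcases (mem_NewF g).mp hg with ⟨i, rfl⟩ | ⟨i, rfl⟩ | rfl
  · exact (mem_Gb _).mpr (Or.inl ⟨i.castSucc, Fin.last n, Fin.castSucc_lt_last i, rfl⟩)
  · exact (mem_Gb _).mpr (Or.inr (Or.inl ⟨i.castSucc, Fin.last n, Fin.castSucc_lt_last i, rfl⟩))
  · exact (mem_Gb _).mpr (Or.inr (Or.inr ⟨Fin.last n, rfl⟩))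

lemma base_subset_Gb {n : ℕ} : ∀ f ∈ (Gb n).image (fun f => f.comp (πmap n)), f ∈ Gb (n + 1) := by
  intro f hf
  obtain ⟨f', hf', rfl⟩ := Finset.mem_image.mp hf
  rcases (mem_Gb f').mp hf' with ⟨i, j, hij, rfl⟩ | ⟨i, j, hij, rfl⟩ | ⟨k, rfl⟩
  · rw [LinearMap.sub_comp, pj_comp, pj_comp]
    exact (mem_Gb _).mpr (Or.inl ⟨i.castSucc, j.castSucc, by
      rwa [Fin.castSucc_lt_castSucc_iff], rfl⟩)
  · rw [LinearMap.add_comp, pj_comp, pj_comp]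
    exact (mem_Gb _).mpr (Or.inr (Or.inl ⟨i.castSucc, j.castSucc, by
      rwa [Fin.castSucc_lt_castSucc_iff], rfl⟩))
  · rw [pj_comp]
    exact (mem_Gb _).mpr (Or.inr (Or.inr ⟨k.castSucc, rfl⟩))

lemma Gb_succ_eq {n : ℕ} :
    Gb (n + 1) = (Gb n).image (fun f => f.comp (πmap n)) ∪ NewF n := by
  apply Finset.Subset.antisymm
  · intro f hf
    rw [Finset.mem_union]
    rcases (mem_Gb f).mp hf with ⟨i, j, hij, rfl⟩ | ⟨i, j, hij, rfl⟩ | ⟨k, rfl⟩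
    · rcases Fin.eq_castSucc_or_eq_last j with ⟨j', rfl⟩ | rfl
      · have hil : i < Fin.last n := lt_trans hij (Fin.castSucc_lt_last j')
        rcases Fin.eq_castSucc_or_eq_last i with ⟨i', rfl⟩ | rfl
        · refine Or.inl (Finset.mem_image.mpr ⟨pj i' - pj j', (mem_Gb _).mpr
            (Or.inl ⟨i', j', by rwa [← Fin.castSucc_lt_castSucc_iff], rfl⟩), ?_⟩)
          rw [LinearMap.sub_comp, pj_comp, pj_comp]
        · exact absurd hil (lt_irrefl _)
      · have : i ≠ Fin.last n := Fin.ne_of_lt hij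
        rcases Fin.eq_castSucc_or_eq_last i with ⟨i', rfl⟩ | rfl
        · exact Or.inr ((mem_NewF _).mpr (Or.inl ⟨i', rfl⟩))
        · exact absurd rfl this
    · rcases Fin.eq_castSucc_or_eq_last j with ⟨j', rfl⟩ | rfl
      · have hil : i < Fin.last n := lt_trans hij (Fin.castSucc_lt_last j')
        rcases Fin.eq_castSucc_or_eq_last i with ⟨i', rfl⟩ | rfl
        · refine Or.inl (Finset.mem_image.mpr ⟨pj i' + pj j', (mem_Gb _).mpr
            (Or.inr (Or.inl ⟨i', j', by rwa [← Fin.castSucc_lt_castSucc_iff], rfl⟩)), ?_⟩)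
          rw [LinearMap.add_comp, pj_comp, pj_comp]
        · exact absurd hil (lt_irrefl _)
      · have : i ≠ Fin.last n := Fin.ne_of_lt hij
        rcases Fin.eq_castSucc_or_eq_last i with ⟨i', rfl⟩ | rfl
        · exact Or.inr ((mem_NewF _).mpr (Or.inr (Or.inl ⟨i', rfl⟩)))
        · exact absurd rfl this
    · rcases Fin.eq_castSucc_or_eq_last k with ⟨k', rfl⟩ | rfl
      · refine Or.inl (Finset.mem_image.mpr ⟨pj k', (mem_Gb _).mpr
          (Or.inr (Or.inr ⟨k', rfl⟩)), ?_⟩)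
        rw [pj_comp]
      · exact Or.inr ((mem_NewF _).mpr (Or.inr (Or.inr rfl)))
  · intro f hf
    rcases Finset.mem_union.mp hf with hf | hf
    · exact base_subset_Gb f hf
    · exact NewF_subset_Gb f hf

lemma NewF_eval_last {n : ℕ} {g : (Fin (n + 1) → ℝ) →ₗ[ℝ] ℝ} (hg : g ∈ NewF n) :
    g (Pi.single (Fin.last n) 1) ≠ 0 := by
  have hlast : pj (Fin.last n) (Pi.single (Fin.last n) (1:ℝ)) = 1 := by simp [single_eval]
  have hcs : ∀ i : Fin n, pj i.castSucc (Pi.single (Fin.last n) (1:ℝ)) = 0 := fun i => by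
    simp [single_eval, Fin.ne_of_lt (Fin.castSucc_lt_last i)]
  rcases (mem_NewF g).mp hg with ⟨i, rfl⟩ | ⟨i, rfl⟩ | rfl
  · rw [LinearMap.sub_apply, hlast, hcs]; norm_num
  · rw [LinearMap.add_apply, hlast, hcs]; norm_num
  · rw [hlast]; norm_num

lemma base_eval_last {n : ℕ} {f : (Fin (n + 1) → ℝ) →ₗ[ℝ] ℝ}
    (hf : f ∈ (Gb n).image (fun f => f.comp (πmap n))) :
    f (Pi.single (Fin.last n) 1) = 0 := by
  obtain ⟨f', _, rfl⟩ := Finset.mem_image.mp hf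
  show f' (πmap n (Pi.single (Fin.last n) 1)) = 0
  have : πmap n (Pi.single (Fin.last n) 1) = 0 :=
    LinearMap.mem_ker.mp (single_last_mem_ker n 1)
  rw [this, map_zero]

lemma NewF_disj_base {n : ℕ} : ∀ g ∈ NewF n, g ∉ (Gb n).image (fun f => f.comp (πmap n)) := by
  intro g hg hmem
  exact NewF_eval_last hg (base_eval_last hmem)

lemma NewF_ker_inj {n : ℕ} {g : (Fin (n + 1) → ℝ) →ₗ[ℝ] ℝ} (hg : g ∈ NewF n) :
    ∀ x, πmap n x = 0 → g x = 0 → x = 0 := by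
  intro x hπ hgx
  have hcs : ∀ i : Fin n, x i.castSucc = 0 := by
    intro i
    have := congrFun hπ i
    simpa using this
  have hlast : x (Fin.last n) = 0 := by
    rcases (mem_NewF g).mp hg with ⟨i, rfl⟩ | ⟨i, rfl⟩ | rfl
    · rw [LinearMap.sub_apply, pj_apply, pj_apply, hcs i] at hgx
      linarith
    · rw [LinearMap.add_apply, pj_apply, pj_apply, hcs i] at hgx
      linarith
    · exact hgx
  exact eq_zero_of_ker_πmap hcs hlast

lemma NewF_card {n : ℕ} : (NewF n).card = 2 * n + 1 := by
  have hD : Function.Injective (fun i : Fin n => pj i.castSucc - pj (Fin.last n)) := by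
    intro i i' h
    by_contra hne
    have hval := LinearMap.congr_fun h (Pi.single i.castSucc (1:ℝ))
    have h1 : (pj i.castSucc - pj (Fin.last n)) (Pi.single i.castSucc (1:ℝ)) = 1 := by
      rw [LinearMap.sub_apply]
      simp [single_eval, Fin.ne_of_lt (Fin.castSucc_lt_last i)]
    have h2 : (pj i'.castSucc - pj (Fin.last n)) (Pi.single i.castSucc (1:ℝ)) = 0 := by
      rw [LinearMap.sub_apply]
      have hne' : i'.castSucc ≠ i.castSucc := fun hc => hne (Fin.castSucc_injective n hc).symm
      simp [single_eval, hne', Fin.ne_of_lt (Fin.castSucc_lt_last i), (Fin.ne_of_lt (Fin.castSucc_lt_last i)).symm]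
    rw [h1, h2] at hval
    exact one_ne_zero hval
  have hS : Function.Injective (fun i : Fin n => pj i.castSucc + pj (Fin.last n)) := by
    intro i i' h
    by_contra hne
    have hval := LinearMap.congr_fun h (Pi.single i.castSucc (1:ℝ))
    have h1 : (pj i.castSucc + pj (Fin.last n)) (Pi.single i.castSucc (1:ℝ)) = 1 := by
      rw [LinearMap.add_apply]
      simp [single_eval, Fin.ne_of_lt (Fin.castSucc_lt_last i)]
    have h2 : (pj i'.castSucc + pj (Fin.last n)) (Pi.single i.castSucc (1:ℝ)) = 0 := by
      rw [LinearMap.add_apply]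
      have hne' : i'.castSucc ≠ i.castSucc := fun hc => hne (Fin.castSucc_injective n hc).symm
      simp [single_eval, hne', Fin.ne_of_lt (Fin.castSucc_lt_last i), (Fin.ne_of_lt (Fin.castSucc_lt_last i)).symm]
    rw [h1, h2] at hval
    exact one_ne_zero hval
  have hvalDS : ∀ (i : Fin n), (pj i.castSucc - pj (Fin.last n)) (Pi.single (Fin.last n) (1:ℝ)) = -1 := by
    intro i
    rw [LinearMap.sub_apply]
    simp [single_eval, Fin.ne_of_lt (Fin.castSucc_lt_last i)]
  have hvalSS : ∀ (i : Fin n), (pj i.castSucc + pj (Fin.last n)) (Pi.single (Fin.last n) (1:ℝ)) = 1 := by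
    intro i
    rw [LinearMap.add_apply]
    simp [single_eval, Fin.ne_of_lt (Fin.castSucc_lt_last i)]
  have hvalZ : (pj (Fin.last n)) (Pi.single (Fin.last n) (1:ℝ)) = 1 := by simp [single_eval]
  have hd1 : Disjoint ((Finset.univ : Finset (Fin n)).image fun i => pj i.castSucc - pj (Fin.last n))
      ((Finset.univ : Finset (Fin n)).image fun i => pj i.castSucc + pj (Fin.last n)) := by
    rw [Finset.disjoint_left]
    rintro f hf1 hf2
    obtain ⟨i, -, rfl⟩ := Finset.mem_image.mp hf1
    obtain ⟨j, -, hj⟩ := Finset.mem_image.mp hf2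
    have := LinearMap.congr_fun hj (Pi.single (Fin.last n) (1:ℝ))
    rw [hvalSS j, hvalDS i] at this
    norm_num at this
  have hd2 : Disjoint (((Finset.univ : Finset (Fin n)).image fun i => pj i.castSucc - pj (Fin.last n))
      ∪ ((Finset.univ : Finset (Fin n)).image fun i => pj i.castSucc + pj (Fin.last n)))
      ({pj (Fin.last n)} : Finset _) := by
    rw [Finset.disjoint_right]
    rintro f hf1 hf2
    rw [Finset.mem_singleton] at hf1
    subst hf1
    rcases Finset.mem_union.mp hf2 with hf | hf
    · obtain ⟨i, -, hi⟩ := Finset.mem_image.mp hf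
      have := LinearMap.congr_fun hi (Pi.single i.castSucc (1:ℝ))
      have e1 : (pj i.castSucc - pj (Fin.last n)) (Pi.single i.castSucc (1:ℝ)) = 1 := by
        rw [LinearMap.sub_apply]
        simp [single_eval, Fin.ne_of_lt (Fin.castSucc_lt_last i)]
      have e2 : (pj (Fin.last n)) (Pi.single i.castSucc (1:ℝ)) = 0 := by
        simp [single_eval, (Fin.ne_of_lt (Fin.castSucc_lt_last i)).symm]
      rw [e1, e2] at this
      norm_num at this
    · obtain ⟨i, -, hi⟩ := Finset.mem_image.mp hf
      have := LinearMap.congr_fun hi (Pi.single i.castSucc (1:ℝ))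
      have e1 : (pj i.castSucc + pj (Fin.last n)) (Pi.single i.castSucc (1:ℝ)) = 1 := by
        rw [LinearMap.add_apply]
        simp [single_eval, Fin.ne_of_lt (Fin.castSucc_lt_last i)]
      have e2 : (pj (Fin.last n)) (Pi.single i.castSucc (1:ℝ)) = 0 := by
        simp [single_eval, (Fin.ne_of_lt (Fin.castSucc_lt_last i)).symm]
      rw [e1, e2] at this
      norm_num at this
  unfold NewF
  rw [Finset.card_union_of_disjoint hd2, Finset.card_union_of_disjoint hd1,
    Finset.card_image_of_injective _ hD, Finset.card_image_of_injective _ hS]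
  simp
  ring

end Projection

section Redundancy

lemma pair_sub {n : ℕ} (a b : Fin n) (hab : a ≠ b) :
    ∃ f ∈ Gb n, ∃ c : ℝ, c ≠ 0 ∧ ∀ y : Fin n → ℝ, y a - y b = c * f y := by
  rcases lt_or_gt_of_ne hab with h | h
  · refine ⟨pj a - pj b, (mem_Gb _).mpr (Or.inl ⟨a, b, h, rfl⟩), 1, one_ne_zero, fun y => ?_⟩
    rw [LinearMap.sub_apply, pj_apply, pj_apply, one_mul]
  · refine ⟨pj b - pj a, (mem_Gb _).mpr (Or.inl ⟨b, a, h, rfl⟩), -1, by norm_num, fun y => ?_⟩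
    rw [LinearMap.sub_apply, pj_apply, pj_apply]
    ring

lemma pair_add {n : ℕ} (a b : Fin n) (hab : a ≠ b) :
    ∃ f ∈ Gb n, ∃ c : ℝ, c ≠ 0 ∧ ∀ y : Fin n → ℝ, y a + y b = c * f y := by
  rcases lt_or_gt_of_ne hab with h | h
  · refine ⟨pj a + pj b, (mem_Gb _).mpr (Or.inr (Or.inl ⟨a, b, h, rfl⟩)), 1, one_ne_zero,
      fun y => ?_⟩
    rw [LinearMap.add_apply, pj_apply, pj_apply, one_mul]
  · refine ⟨pj b + pj a, (mem_Gb _).mpr (Or.inr (Or.inl ⟨b, a, h, rfl⟩)), 1, one_ne_zero,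
      fun y => ?_⟩
    rw [LinearMap.add_apply, pj_apply, pj_apply, one_mul]
    ring

lemma single_mul {n : ℕ} (a : Fin n) (c : ℝ) (hc : c ≠ 0) :
    ∃ f ∈ Gb n, ∃ c' : ℝ, c' ≠ 0 ∧ ∀ y : Fin n → ℝ, c * y a = c' * f y :=
  ⟨pj a, (mem_Gb _).mpr (Or.inr (Or.inr ⟨a, rfl⟩)), c, hc, fun y => by rw [pj_apply]⟩

lemma NewF_red {n : ℕ} {g g' : (Fin (n + 1) → ℝ) →ₗ[ℝ] ℝ}
    (hg : g ∈ NewF n) (hg' : g' ∈ NewF n) (hne : g' ≠ g) :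
    ∃ f ∈ (Gb n).image (fun f => f.comp (πmap n)), ∃ c : ℝ, c ≠ 0 ∧
      ∀ x ∈ LinearMap.ker g, g' x = c * f x := by
  have lift : ∀ (P : (Fin (n + 1) → ℝ) → ℝ),
      (∃ f ∈ Gb n, ∃ c : ℝ, c ≠ 0 ∧ ∀ x ∈ LinearMap.ker g, P x = c * f (πmap n x)) →
      (∃ f ∈ (Gb n).image (fun f => f.comp (πmap n)), ∃ c : ℝ, c ≠ 0 ∧
        ∀ x ∈ LinearMap.ker g, P x = c * f x) := by
    rintro P ⟨f, hf, c, hc, hrel⟩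
    exact ⟨f.comp (πmap n), Finset.mem_image_of_mem _ hf, c, hc, hrel⟩
  rcases (mem_NewF g).mp hg with ⟨a, rfl⟩ | ⟨a, rfl⟩ | rfl
  · -- g = pj (cs a) - pj last ; on its kernel  x last = x (cs a)
    have hker : ∀ x ∈ LinearMap.ker (pj a.castSucc - pj (Fin.last n)),
        x (Fin.last n) = x a.castSucc := by
      intro x hx
      rw [LinearMap.mem_ker, LinearMap.sub_apply, pj_apply, pj_apply] at hx
      linarith
    rcases (mem_NewF g').mp hg' with ⟨b, rfl⟩ | ⟨b, rfl⟩ | rfl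
    · have hba : b ≠ a := by rintro rfl; exact hne rfl
      obtain ⟨f, hf, c, hc, hrel⟩ := pair_sub b a hba
      refine lift _ ⟨f, hf, c, hc, fun x hx => ?_⟩
      have := hrel (πmap n x)
      simp only [πmap_apply] at this
      rw [LinearMap.sub_apply, pj_apply, pj_apply, hker x hx]
      linarith
    · rcases eq_or_ne b a with rfl | hba
      · obtain ⟨f, hf, c, hc, hrel⟩ := single_mul b (2:ℝ) two_ne_zero
        refine lift _ ⟨f, hf, c, hc, fun x hx => ?_⟩
        have := hrel (πmap n x)
        simp only [πmap_apply] at this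
        rw [LinearMap.add_apply, pj_apply, pj_apply, hker x hx]
        linarith
      · obtain ⟨f, hf, c, hc, hrel⟩ := pair_add b a hba
        refine lift _ ⟨f, hf, c, hc, fun x hx => ?_⟩
        have := hrel (πmap n x)
        simp only [πmap_apply] at this
        rw [LinearMap.add_apply, pj_apply, pj_apply, hker x hx]
        linarith
    · obtain ⟨f, hf, c, hc, hrel⟩ := single_mul a (1:ℝ) one_ne_zero
      refine lift _ ⟨f, hf, c, hc, fun x hx => ?_⟩
      have := hrel (πmap n x)
      simp only [πmap_apply] at this
      rw [pj_apply, hker x hx]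
      linarith
  · -- g = pj (cs a) + pj last ; on its kernel  x last = - x (cs a)
    have hker : ∀ x ∈ LinearMap.ker (pj a.castSucc + pj (Fin.last n)),
        x (Fin.last n) = - x a.castSucc := by
      intro x hx
      rw [LinearMap.mem_ker, LinearMap.add_apply, pj_apply, pj_apply] at hx
      linarith
    rcases (mem_NewF g').mp hg' with ⟨b, rfl⟩ | ⟨b, rfl⟩ | rfl
    · rcases eq_or_ne b a with rfl | hba
      · obtain ⟨f, hf, c, hc, hrel⟩ := single_mul b (2:ℝ) two_ne_zero
        refine lift _ ⟨f, hf, c, hc, fun x hx => ?_⟩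
        have := hrel (πmap n x)
        simp only [πmap_apply] at this
        rw [LinearMap.sub_apply, pj_apply, pj_apply, hker x hx]
        linarith
      · obtain ⟨f, hf, c, hc, hrel⟩ := pair_add b a hba
        refine lift _ ⟨f, hf, c, hc, fun x hx => ?_⟩
        have := hrel (πmap n x)
        simp only [πmap_apply] at this
        rw [LinearMap.sub_apply, pj_apply, pj_apply, hker x hx]
        linarith
    · have hba : b ≠ a := by rintro rfl; exact hne rfl
      obtain ⟨f, hf, c, hc, hrel⟩ := pair_sub b a hba
      refine lift _ ⟨f, hf, c, hc, fun x hx => ?_⟩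
      have := hrel (πmap n x)
      simp only [πmap_apply] at this
      rw [LinearMap.add_apply, pj_apply, pj_apply, hker x hx]
      linarith
    · obtain ⟨f, hf, c, hc, hrel⟩ := single_mul a (-1:ℝ) (by norm_num)
      refine lift _ ⟨f, hf, c, hc, fun x hx => ?_⟩
      have := hrel (πmap n x)
      simp only [πmap_apply] at this
      rw [pj_apply, hker x hx]
      linarith
  · -- g = pj last ; on its kernel  x last = 0
    have hker : ∀ x ∈ LinearMap.ker (pj (Fin.last n) :
        (Fin (n + 1) → ℝ) →ₗ[ℝ] ℝ), x (Fin.last n) = 0 := by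
      intro x hx
      rw [LinearMap.mem_ker, pj_apply] at hx
      exact hx
    rcases (mem_NewF g').mp hg' with ⟨b, rfl⟩ | ⟨b, rfl⟩ | rfl
    · obtain ⟨f, hf, c, hc, hrel⟩ := single_mul b (1:ℝ) one_ne_zero
      refine lift _ ⟨f, hf, c, hc, fun x hx => ?_⟩
      have := hrel (πmap n x)
      simp only [πmap_apply] at this
      rw [LinearMap.sub_apply, pj_apply, pj_apply, hker x hx]
      linarith
    · obtain ⟨f, hf, c, hc, hrel⟩ := single_mul b (1:ℝ) one_ne_zero
      refine lift _ ⟨f, hf, c, hc, fun x hx => ?_⟩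
      have := hrel (πmap n x)
      simp only [πmap_apply] at this
      rw [LinearMap.add_apply, pj_apply, pj_apply, hker x hx]
      linarith
    · exact absurd rfl hne

end Redundancy

section GPTransfer

/-- general position in dimension form -/
def GPgen (n m : ℕ) (L : Submodule ℝ (Fin n → ℝ)) : Prop :=
  ∀ B ⊆ arrangementB n, B.Nonempty →
    Module.finrank ℝ ↥(sInf B ⊓ L) = m - (n - Module.finrank ℝ ↥(sInf B))

lemma GP_singleton {n m : ℕ} {L : Submodule ℝ (Fin n → ℝ)} (h : GPgen n m L)
    {f : (Fin n → ℝ) →ₗ[ℝ] ℝ} (hf : f ∈ Gb n) :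
    Module.finrank ℝ ↥(L ⊓ LinearMap.ker f) = m - 1 := by
  have hker : LinearMap.ker f ∈ arrangementB n := by
    rw [arrangementB_eq_ker]
    exact ⟨f, hf, rfl⟩
  have hGP := h {LinearMap.ker f} (by simpa using hker) ⟨_, rfl⟩
  rw [sInf_singleton] at hGP
  have hrk := Gb_finrank_ker hf
  rw [finrank_inf_eq, hGP]
  omega

lemma GP_exists_nonzero {n m : ℕ} {L : Submodule ℝ (Fin n → ℝ)} (h : GPgen n m L)
    (hm : 1 ≤ m) (hL : Module.finrank ℝ ↥L = m)
    {f : (Fin n → ℝ) →ₗ[ℝ] ℝ} (hf : f ∈ Gb n) :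
    ∃ v ∈ L, f v ≠ 0 := by
  by_contra hcon
  push_neg at hcon
  have hle : L ⊓ LinearMap.ker f = L := by
    rw [inf_eq_left]
    intro x hx
    exact LinearMap.mem_ker.mpr (hcon x hx)
  have := GP_singleton h hf
  rw [hle, hL] at this
  omega

lemma comap_mem_arr {n : ℕ} {H : Submodule ℝ (Fin n → ℝ)} (hH : H ∈ arrangementB n) :
    H.comap (πmap n) ∈ arrangementB (n + 1) := by
  rw [arrangementB_eq_ker] at hH ⊢
  obtain ⟨f, hf, rfl⟩ := hH
  refine ⟨f.comp (πmap n), base_subset_Gb _ (Finset.mem_image_of_mem _ hf), ?_⟩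
  rw [LinearMap.ker_comp]

lemma finrank_comap_flat {n : ℕ} (U : Submodule ℝ (Fin n → ℝ)) :
    Module.finrank ℝ ↥(U.comap (πmap n)) = Module.finrank ℝ ↥U + 1 := by
  rw [finrank_comap_surj (πmap n) (πmap_surj n) U, finrank_ker_πmap]

lemma GP_ker_π_bot {n m : ℕ} {L : Submodule ℝ (Fin (n + 1) → ℝ)} (h : GPgen (n + 1) m L)
    (hn : 1 ≤ n) (hmn : m ≤ n) :
    L ⊓ LinearMap.ker (πmap n) = ⊥ := by
  set B : Set (Submodule ℝ (Fin (n + 1) → ℝ)) :=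
    {H | ∃ i : Fin n, H = LinearMap.ker (pj i.castSucc)} with hBdef
  have hsub : B ⊆ arrangementB (n + 1) := by
    rintro H ⟨i, rfl⟩
    exact Or.inr (Or.inr ⟨i.castSucc, rfl⟩)
  have hne : B.Nonempty := ⟨_, ⟨⟨0, hn⟩, rfl⟩⟩
  have hsInf : sInf B = LinearMap.ker (πmap n) := by
    ext x
    rw [Submodule.mem_sInf, mem_ker_πmap]
    constructor
    · intro hx i
      exact hx _ ⟨i, rfl⟩
    · rintro hx H ⟨i, rfl⟩
      exact LinearMap.mem_ker.mpr (hx i)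
  have hGP := h B hsub hne
  rw [hsInf, finrank_ker_πmap] at hGP
  have : Module.finrank ℝ ↥(LinearMap.ker (πmap n) ⊓ L) = 0 := by
    rw [hGP]
    omega
  rw [finrank_inf_eq] at this
  exact Submodule.finrank_eq_zero.mp this

lemma GP_deletion {n m : ℕ} {L : Submodule ℝ (Fin (n + 1) → ℝ)} (h : GPgen (n + 1) m L)
    (hn : 1 ≤ n) (hmn : m ≤ n) (hL : Module.finrank ℝ ↥L = m) :
    Module.finrank ℝ ↥(L.map (πmap n)) = m ∧ GPgen n m (L.map (πmap n)) := by
  have hbot := GP_ker_π_bot h hn hmn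
  constructor
  · rw [finrank_map_of_inj (πmap n) L hbot, hL]
  · intro B hB hBne
    set B' : Set (Submodule ℝ (Fin (n + 1) → ℝ)) := (fun H => H.comap (πmap n)) '' B with hB'
    have hB'sub : B' ⊆ arrangementB (n + 1) := by
      rintro H' ⟨H, hH, rfl⟩
      exact comap_mem_arr (hB hH)
    have hB'ne : B'.Nonempty := hBne.image _
    have hsInf : sInf B' = (sInf B).comap (πmap n) := sInf_image_comap _ B hBne
    have hr : Module.finrank ℝ ↥(sInf B') = Module.finrank ℝ ↥(sInf B) + 1 := by
      rw [hsInf, finrank_comap_flat]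
    have hGP := h B' hB'sub hB'ne
    rw [hsInf] at hGP hr
    -- identify the intersections
    have hid : sInf B ⊓ L.map (πmap n) = ((L ⊓ (sInf B).comap (πmap n)).map (πmap n)) :=
      inf_map_comm (πmap n) L (sInf B)
    have hinj : (L ⊓ (sInf B).comap (πmap n)) ⊓ LinearMap.ker (πmap n) = ⊥ := by
      rw [eq_bot_iff, ← hbot]
      intro x hx
      simp only [Submodule.mem_inf] at hx ⊢
      exact ⟨hx.1.1, hx.2⟩
    rw [hid, finrank_map_of_inj _ _ hinj, finrank_inf_eq, hGP]
    have hrle : Module.finrank ℝ ↥(sInf B) ≤ n :=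
      le_trans (Submodule.finrank_le _) (by
        simp [Module.finrank_fintype_fun_eq_card])
    rw [finrank_comap_flat]
    omega

lemma GP_deletion_top {n : ℕ} {L : Submodule ℝ (Fin (n + 1) → ℝ)}
    (hL : Module.finrank ℝ ↥L = n + 1) :
    L.map (πmap n) = ⊤ ∧ GPgen n n (⊤ : Submodule ℝ (Fin n → ℝ)) := by
  have hLtop : L = ⊤ := by
    apply Submodule.eq_top_of_finrank_eq
    rw [hL]
    simp [Module.finrank_fintype_fun_eq_card]
  constructor
  · rw [hLtop, Submodule.map_top, LinearMap.range_eq_top.mpr (πmap_surj n)]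
  · intro B hB hBne
    have hrle : Module.finrank ℝ ↥(sInf B) ≤ n :=
      le_trans (Submodule.finrank_le _) (by
        simp [Module.finrank_fintype_fun_eq_card])
    rw [inf_top_eq]
    omega

lemma GP_restriction {n m : ℕ} {L : Submodule ℝ (Fin (n + 1) → ℝ)} (h : GPgen (n + 1) m L)
    {g : (Fin (n + 1) → ℝ) →ₗ[ℝ] ℝ} (hg : g ∈ NewF n) :
    Module.finrank ℝ ↥((L ⊓ LinearMap.ker g).map (πmap n)) = m - 1 ∧
      GPgen n (m - 1) ((L ⊓ LinearMap.ker g).map (πmap n)) := by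
  have hkerg : LinearMap.ker g ⊓ LinearMap.ker (πmap n) = ⊥ := by
    rw [eq_bot_iff]
    intro x hx
    rw [Submodule.mem_inf, LinearMap.mem_ker, LinearMap.mem_ker] at hx
    rw [Submodule.mem_bot]
    exact NewF_ker_inj hg x hx.2 hx.1
  have hsubbot : ∀ (U : Submodule ℝ (Fin (n + 1) → ℝ)),
      (U ⊓ LinearMap.ker g) ⊓ LinearMap.ker (πmap n) = ⊥ := by
    intro U
    rw [eq_bot_iff, ← hkerg]
    intro x hx
    simp only [Submodule.mem_inf] at hx ⊢
    exact ⟨hx.1.2, hx.2⟩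
  constructor
  · rw [finrank_map_of_inj _ _ (hsubbot L), GP_singleton h (NewF_subset_Gb g hg)]
  · intro B hB hBne
    set U : Submodule ℝ (Fin (n + 1) → ℝ) := (sInf B).comap (πmap n) with hU
    have hkerle : LinearMap.ker (πmap n) ≤ U := by
      intro x hx
      rw [LinearMap.mem_ker] at hx
      show πmap n x ∈ sInf B
      rw [hx]
      exact (sInf B).zero_mem
    set B'' : Set (Submodule ℝ (Fin (n + 1) → ℝ)) :=
      insert (LinearMap.ker g) ((fun H => H.comap (πmap n)) '' B) with hB''
    have hB''sub : B'' ⊆ arrangementB (n + 1) := by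
      rintro H (rfl | ⟨H', hH', rfl⟩)
      · rw [arrangementB_eq_ker]
        exact ⟨g, NewF_subset_Gb g hg, rfl⟩
      · exact comap_mem_arr (hB hH')
    have hB''ne : B''.Nonempty := ⟨_, Set.mem_insert _ _⟩
    have hsInf'' : sInf B'' = LinearMap.ker g ⊓ U := by
      rw [hB'', sInf_insert, sInf_image_comap _ B hBne]
    have hwit : ∃ w ∈ U, g w ≠ 0 := by
      refine ⟨Pi.single (Fin.last n) 1, hkerle (single_last_mem_ker n 1), NewF_eval_last hg⟩
    have hrU : Module.finrank ℝ ↥U = Module.finrank ℝ ↥(sInf B) + 1 := finrank_comap_flat _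
    have hr'' : Module.finrank ℝ ↥(sInf B'') = Module.finrank ℝ ↥(sInf B) := by
      rw [hsInf'', inf_comm]
      have := finrank_inf_ker U g hwit
      omega
    have hGP := h B'' hB''sub hB''ne
    rw [hr''] at hGP
    have hid : sInf B ⊓ (L ⊓ LinearMap.ker g).map (πmap n)
        = (((L ⊓ LinearMap.ker g) ⊓ U).map (πmap n)) :=
      inf_map_comm (πmap n) _ (sInf B)
    have hinj2 : ((L ⊓ LinearMap.ker g) ⊓ U) ⊓ LinearMap.ker (πmap n) = ⊥ := by
      rw [eq_bot_iff, ← hkerg]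
      intro x hx
      simp only [Submodule.mem_inf] at hx ⊢
      exact ⟨hx.1.1.2, hx.2⟩
    have hrearr : (L ⊓ LinearMap.ker g) ⊓ U = sInf B'' ⊓ L := by
      rw [hsInf'']
      ext x
      simp only [Submodule.mem_inf]
      tauto
    rw [hid, finrank_map_of_inj _ _ hinj2, hrearr, hGP]
    have hrle : Module.finrank ℝ ↥(sInf B) ≤ n :=
      le_trans (Submodule.finrank_le _) (by
        simp [Module.finrank_fintype_fun_eq_card])
    omega

end GPTransfer

section MainCount

lemma SV_count : ∀ (n m : ℕ), 1 ≤ m → m ≤ n → ∀ L : Submodule ℝ (Fin n → ℝ),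
    Module.finrank ℝ ↥L = m → GPgen n m L →
    (SV L (Gb n)).ncard = 2 * SS n (n - m + 1) := by
  intro n
  induction n with
  | zero => intro m h1 h2; omega
  | succ n ih =>
    intro m hm1 hmn L hL hGP
    have hchain : (SV L (Gb (n + 1))).ncard
        = (SV L ((Gb n).image (fun f => f.comp (πmap n)))).ncard
          + ∑ g ∈ NewF n,
            (SV (L ⊓ LinearMap.ker g) ((Gb n).image (fun f => f.comp (πmap n)))).ncard := by
      rw [Gb_succ_eq]
      apply SV_union_chain
      · exact fun g hg => NewF_disj_base g hg
      · exact fun g hg => GP_exists_nonzero hGP hm1 hL (NewF_subset_Gb g hg)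
      · intro g hg g' hg' hne
        obtain ⟨f, hf, c, hc, hrel⟩ := NewF_red hg hg' hne
        exact ⟨f, hf, c, hc, fun x hx => hrel x (Submodule.mem_inf.mp hx).2⟩
    rw [hchain, SV_comp_card (πmap n) (πmap_surj n) L (Gb n)]
    have hterm : ∀ g ∈ NewF n,
        (SV (L ⊓ LinearMap.ker g) ((Gb n).image fun f => f.comp (πmap n))).ncard
          = (SV ((L ⊓ LinearMap.ker g).map (πmap n)) (Gb n)).ncard :=
      fun g _ => SV_comp_card (πmap n) (πmap_surj n) _ (Gb n)
    have hsum : ∑ g ∈ NewF n,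
        (SV (L ⊓ LinearMap.ker g) ((Gb n).image fun f => f.comp (πmap n))).ncard
        = ∑ g ∈ NewF n,
          (SV ((L ⊓ LinearMap.ker g).map (πmap n)) (Gb n)).ncard :=
      Finset.sum_congr rfl hterm
    rw [hsum]
    rcases Nat.eq_zero_or_pos n with rfl | hn
    · -- base : ambient dimension 1
      have hm : m = 1 := by omega
      subst hm
      have hGb0 : Gb 0 = ∅ := by
        apply Finset.eq_empty_of_forall_notMem
        intro f hf
        rcases (mem_Gb f).mp hf with ⟨i, -, -, -⟩ | ⟨i, -, -, -⟩ | ⟨i, -⟩ <;> exact i.elim0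
      have h0 : (SV (L.map (πmap 0)) (Gb 0)).ncard = 1 := by
        rw [hGb0, SV_empty]
        exact Set.ncard_singleton _
      have h1 : ∀ g ∈ NewF 0,
          (SV ((L ⊓ LinearMap.ker g).map (πmap 0)) (Gb 0)).ncard = 1 := by
        intro g hg
        rw [hGb0, SV_empty]
        exact Set.ncard_singleton _
      rw [h0, Finset.sum_congr rfl h1, Finset.sum_const, NewF_card]
      norm_num
      exact SS_top 1
    · rcases Nat.lt_or_ge m (n + 1) with hmlt | hmge
      · -- m ≤ n
        have hmn' : m ≤ n := by omega
        obtain ⟨hfr, hGP'⟩ := GP_deletion hGP hn hmn' hL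
        rw [ih m hm1 hmn' _ hfr hGP']
        rcases Nat.eq_or_lt_of_le hm1 with hm1' | hm2
        · -- m = 1
          have hm : m = 1 := hm1'.symm
          subst hm
          have hterm0 : ∀ g ∈ NewF n,
              (SV ((L ⊓ LinearMap.ker g).map (πmap n)) (Gb n)).ncard = 0 := by
            intro g hg
            obtain ⟨hfr', -⟩ := GP_restriction hGP hg
            have hb : (L ⊓ LinearMap.ker g).map (πmap n) = ⊥ :=
              Submodule.finrank_eq_zero.mp (by rw [hfr'])
            rw [hb, SV_bot _ ⟨pj ⟨0, hn⟩, (mem_Gb _).mpr (Or.inr (Or.inr ⟨⟨0, hn⟩, rfl⟩))⟩]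
            exact Set.ncard_empty _
          rw [Finset.sum_congr rfl hterm0, Finset.sum_const_zero]
          have h1 : n - 1 + 1 = n := by omega
          have h2 : n + 1 - 1 + 1 = n + 1 := by omega
          rw [h1, h2, SS_top, SS_top]
          omega
        · -- 2 ≤ m
          have hterm2 : ∀ g ∈ NewF n,
              (SV ((L ⊓ LinearMap.ker g).map (πmap n)) (Gb n)).ncard
                = 2 * SS n (n - m + 2) := by
            intro g hg
            obtain ⟨hfr', hGP''⟩ := GP_restriction hGP hg
            rw [ih (m - 1) (by omega) (by omega) _ hfr' hGP'']
            congr 2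
            omega
          rw [Finset.sum_congr rfl hterm2, Finset.sum_const, NewF_card]
          have ha : n + 1 - m + 1 = (n - m + 1) + 1 := by omega
          have hb : n - m + 1 + 1 = n - m + 2 := by omega
          rw [ha, SS_succ_succ, hb, smul_eq_mul]
          ring
      · -- m = n+1
        have hm : m = n + 1 := by omega
        subst hm
        obtain ⟨htop, hGPtop⟩ := GP_deletion_top hL
        rw [htop]
        have hfrtop : Module.finrank ℝ ↥(⊤ : Submodule ℝ (Fin n → ℝ)) = n := by
          rw [finrank_top]
          simp [Module.finrank_fintype_fun_eq_card]
        rw [ih n hn (le_refl n) ⊤ hfrtop hGPtop]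
        have hterm2 : ∀ g ∈ NewF n,
            (SV ((L ⊓ LinearMap.ker g).map (πmap n)) (Gb n)).ncard = 2 * SS n 1 := by
          intro g hg
          obtain ⟨hfr', hGP''⟩ := GP_restriction hGP hg
          have hfr'' : Module.finrank ℝ ↥((L ⊓ LinearMap.ker g).map (πmap n)) = n := hfr'
          have hGP''' : GPgen n n ((L ⊓ LinearMap.ker g).map (πmap n)) := hGP''
          rw [ih n hn (le_refl n) _ hfr'' hGP''']
          congr 2
          omega
        rw [Finset.sum_congr rfl hterm2, Finset.sum_const, NewF_card, smul_eq_mul]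
        have h1 : n - n + 1 = 1 := by omega
        have h2 : n + 1 - (n + 1) + 1 = 1 := by omega
        rw [h1, h2, show (1 : ℕ) = 0 + 1 from rfl, SS_succ_succ, SS_even_odd n hn]
        ring

end MainCount

section Bridge

/-- two maps with the same fibers on `s` have equinumerous images -/
lemma ncard_image_eq_of_fiber_iff {α β γ : Type*} (s : Set α) (F : α → β) (G : α → γ)
    (h : ∀ a ∈ s, ∀ b ∈ s, F a = F b ↔ G a = G b) :
    (F '' s).ncard = (G '' s).ncard := by
  rw [← Nat.card_coe_set_eq, ← Nat.card_coe_set_eq]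
  apply Nat.card_congr
  have hmem : ∀ t : ↥(F '' s), ∃ a, a ∈ s ∧ F a = ↑t := fun t => (Set.mem_image _ _ _).mp t.2
  refine Equiv.ofBijective (fun t => ⟨G (hmem t).choose,
    ⟨(hmem t).choose, (hmem t).choose_spec.1, rfl⟩⟩) ⟨?_, ?_⟩
  · rintro t₁ t₂ he
    have h1 := (hmem t₁).choose_spec
    have h2 := (hmem t₂).choose_spec
    have hG : G (hmem t₁).choose = G (hmem t₂).choose := congrArg Subtype.val he
    have hF : F (hmem t₁).choose = F (hmem t₂).choose :=
      (h _ h1.1 _ h2.1).mpr hG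
    exact Subtype.ext (h1.2 ▸ h2.2 ▸ hF)
  · rintro ⟨u, a, has, rfl⟩
    refine ⟨⟨F a, ⟨a, has, rfl⟩⟩, ?_⟩
    apply Subtype.ext
    show G _ = G a
    have hsp := (hmem ⟨F a, ⟨a, has, rfl⟩⟩).choose_spec
    exact (h _ hsp.1 _ has).mp hsp.2

/-- sign vector map -/
noncomputable def sgnG (n : ℕ) (x : Fin n → ℝ) : ((Fin n → ℝ) →ₗ[ℝ] ℝ) → Bool :=
  fun f => decide (f ∈ Gb n) && decide (0 < f x)

lemma SV_eq_image (n : ℕ) (L : Submodule ℝ (Fin n → ℝ)) :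
    SV L (Gb n) = sgnG n '' (setArrComplement n (arrangementB n) ∩ (L : Set (Fin n → ℝ))) := by
  ext σ
  constructor
  · rintro ⟨h1, x, hxL, h2⟩
    have hxc : x ∈ setArrComplement n (arrangementB n) := by
      rw [comp_eq]
      exact fun f hf => (h2 f hf).1
    refine ⟨x, ⟨hxc, hxL⟩, ?_⟩
    funext f
    by_cases hf : f ∈ Gb n
    · rw [sgnG, decide_eq_true hf, Bool.true_and]
      exact ((h2 f hf).2).symm
    · rw [sgnG, decide_eq_false hf, Bool.false_and]
      exact (h1 f hf).symm
  · rintro ⟨x, ⟨hxc, hxL⟩, rfl⟩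
    rw [comp_eq] at hxc
    refine ⟨fun f hf => by rw [sgnG, decide_eq_false hf, Bool.false_and], x, hxL, fun f hf => ?_⟩
    exact ⟨hxc f hf, by rw [sgnG, decide_eq_true hf, Bool.true_and]⟩

lemma regions_eq_image (n : ℕ) (L : Submodule ℝ (Fin n → ℝ)) :
    {R | R ∈ setArrRegions n (arrangementB n) ∧ (R ∩ (L : Set (Fin n → ℝ))).Nonempty}
      = (fun y => connectedComponentIn (setArrComplement n (arrangementB n)) y) ''
          (setArrComplement n (arrangementB n) ∩ (L : Set (Fin n → ℝ))) := by
  ext R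
  constructor
  · rintro ⟨⟨x, hx, rfl⟩, ⟨y, hyR, hyL⟩⟩
    have hyc : y ∈ setArrComplement n (arrangementB n) :=
      connectedComponentIn_subset _ _ hyR
    exact ⟨y, ⟨hyc, hyL⟩, (connectedComponentIn_eq hyR).symm⟩
  · rintro ⟨y, ⟨hyc, hyL⟩, rfl⟩
    exact ⟨⟨y, hyc, rfl⟩, ⟨y, mem_connectedComponentIn hyc, hyL⟩⟩

lemma sign_component_same {n : ℕ} {x y : Fin n → ℝ}
    (hx : x ∈ setArrComplement n (arrangementB n))
    (hy : y ∈ setArrComplement n (arrangementB n))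
    (h : connectedComponentIn (setArrComplement n (arrangementB n)) x
      = connectedComponentIn (setArrComplement n (arrangementB n)) y) :
    sgnG n x = sgnG n y := by
  rw [comp_eq] at hx hy
  have key : ∀ f ∈ Gb n, (0 < f x ↔ 0 < f y) := by
    intro f hf
    have hcont : Continuous f := LinearMap.continuous_of_finiteDimensional f
    set Up : Set (Fin n → ℝ) := f ⁻¹' (Set.Ioi 0) with hUp
    set Um : Set (Fin n → ℝ) := f ⁻¹' (Set.Iio 0) with hUm
    have hUpo : IsOpen Up := isOpen_Ioi.preimage hcont
    have hUmo : IsOpen Um := isOpen_Iio.preimage hcont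
    set C := connectedComponentIn (setArrComplement n (arrangementB n)) x with hC
    have hCpre : IsPreconnected C := isPreconnected_connectedComponentIn
    have hCsub : C ⊆ Up ∪ Um := by
      intro z hz
      have hzc := connectedComponentIn_subset _ _ hz
      rw [comp_eq] at hzc
      rcases lt_or_gt_of_ne (hzc f hf) with hzf | hzf
      · exact Or.inr hzf
      · exact Or.inl hzf
    have hxC : x ∈ C := mem_connectedComponentIn (by rw [comp_eq]; exact hx)
    have hyC : y ∈ C := by
      rw [h]
      exact mem_connectedComponentIn (by rw [comp_eq]; exact hy)
    constructor
    · intro hfx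
      by_contra hfy
      have hfy' : f y < 0 := lt_of_le_of_ne (not_lt.mp hfy) (hy f hf)
      obtain ⟨z, -, hzp, hzm⟩ := hCpre Up Um hUpo hUmo hCsub ⟨x, hxC, hfx⟩ ⟨y, hyC, hfy'⟩
      have h1 : (0:ℝ) < f z := hzp
      have h2 : f z < 0 := hzm
      linarith
    · intro hfy
      by_contra hfx
      have hfx' : f x < 0 := lt_of_le_of_ne (not_lt.mp hfx) (hx f hf)
      obtain ⟨z, -, hzp, hzm⟩ := hCpre Up Um hUpo hUmo hCsub ⟨y, hyC, hfy⟩ ⟨x, hxC, hfx'⟩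
      have h1 : (0:ℝ) < f z := hzp
      have h2 : f z < 0 := hzm
      linarith
  funext f
  by_cases hf : f ∈ Gb n
  · rw [sgnG, sgnG, decide_eq_true hf, Bool.true_and, Bool.true_and, decide_eq_decide]
    exact key f hf
  · rw [sgnG, sgnG, decide_eq_false hf, Bool.false_and, Bool.false_and]

lemma component_sign_same {n : ℕ} {x y : Fin n → ℝ}
    (hx : x ∈ setArrComplement n (arrangementB n))
    (hy : y ∈ setArrComplement n (arrangementB n))
    (h : sgnG n x = sgnG n y) :
    connectedComponentIn (setArrComplement n (arrangementB n)) x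
      = connectedComponentIn (setArrComplement n (arrangementB n)) y := by
  rw [comp_eq] at hx hy
  have key : ∀ f ∈ Gb n, (0 < f x ↔ 0 < f y) := by
    intro f hf
    have := congrFun h f
    rw [sgnG, sgnG, decide_eq_true hf, Bool.true_and, Bool.true_and, decide_eq_decide] at this
    exact this
  have hseg : segment ℝ x y ⊆ setArrComplement n (arrangementB n) := by
    intro z hz
    obtain ⟨a, b, ha, hb, hab, rfl⟩ := hz
    rw [comp_eq]
    intro f hf
    have hfz : f (a • x + b • y) = a * f x + b * f y := by
      rw [map_add, map_smul, map_smul, smul_eq_mul, smul_eq_mul]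
    rw [hfz]
    rcases lt_or_gt_of_ne (hx f hf) with hfx | hfx
    · have hfy : f y < 0 := by
        rcases lt_or_gt_of_ne (hy f hf) with h' | h'
        · exact h'
        · exact absurd ((key f hf).mpr h') (not_lt.mpr (le_of_lt hfx))
      rcases eq_or_lt_of_le ha with rfl | ha'
      · have hb1 : b = 1 := by linarith
        rw [hb1]
        simp only [zero_mul, zero_add, one_mul]
        exact ne_of_lt hfy
      · have h1 : a * f x < 0 := mul_neg_of_pos_of_neg ha' hfx
        have h2 : b * f y ≤ 0 := mul_nonpos_of_nonneg_of_nonpos hb (le_of_lt hfy)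
        exact ne_of_lt (by linarith)
    · have hfy : 0 < f y := (key f hf).mp hfx
      rcases eq_or_lt_of_le ha with rfl | ha'
      · have hb1 : b = 1 := by linarith
        rw [hb1]
        simp only [zero_mul, zero_add, one_mul]
        exact ne_of_gt hfy
      · have h1 : 0 < a * f x := mul_pos ha' hfx
        have h2 : 0 ≤ b * f y := mul_nonneg hb (le_of_lt hfy)
        exact ne_of_gt (by linarith)
  have hpre : IsPreconnected (segment ℝ x y) := (convex_segment x y).isPreconnected
  have hsub := hpre.subset_connectedComponentIn (left_mem_segment ℝ x y) hseg
  exact connectedComponentIn_eq (hsub (right_mem_segment ℝ x y))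

end Bridge

/-- The number of regions of the reflection arrangement of type `B_n` intersected by a
generic subspace of codimension `d` equals `2(B(n,d+1) + B(n,d+3) + ⋯)`. -/
theorem regions_reflection_arrangement_B
    (n d : ℕ) (hd : 1 ≤ d) (hdn : d + 1 ≤ n)
    (L : Submodule ℝ (Fin n → ℝ)) (hL : Module.finrank ℝ ↥L = n - d)
    (hGP : setArrGenPos n d (arrangementB n) L) :
    Set.ncard {R | R ∈ setArrRegions n (arrangementB n)
        ∧ (R ∩ (L : Set (Fin n → ℝ))).Nonempty}
      = 2 * ∑ j ∈ Finset.range (n + 1), Bcoef n (d + 1 + 2 * j) := by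
  have hm1 : 1 ≤ n - d := by omega
  have hmn : n - d ≤ n := Nat.sub_le n d
  have hGP' : GPgen n (n - d) L := hGP
  have hcount := SV_count n (n - d) hm1 hmn L hL hGP'
  rw [regions_eq_image n L]
  rw [ncard_image_eq_of_fiber_iff _ _ (sgnG n) (fun a ha b hb =>
    ⟨fun h => sign_component_same ha.1 hb.1 h,
     fun h => component_sign_same ha.1 hb.1 h⟩)]
  rw [← SV_eq_image n L, hcount]
  have : n - (n - d) + 1 = d + 1 := by omega
  rw [this]
  rfl
end

section
/- Fix d ≥ 2. As n → ∞, the non-absorption probability of a random walk bridge in ℝ^d from Theorem A (type A_{n−1}) satisfies (2/n!)(⟦n, d⟧ + ⟦n, d−2⟧ + ⋯) ~ 2 (log n)^{d−1} / ((d−1)! · n), where the sum runs over k = d, d−2, … with k ≥ 1, and a_n ~ b_n means a_n / b_n → 1. -/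
open Finset Filter

/-- The unsigned Stirling numbers of the first kind `⟦n,k⟧`:
coefficients of `t(t+1)⋯(t+n−1)`. -/
noncomputable def stirlingFirst (n k : ℕ) : ℕ :=
  (∏ i ∈ Finset.range n, (Polynomial.X + Polynomial.C i)).coeff k

section Aux

lemma st_zero (n : ℕ) : stirlingFirst (n+1) 0 = 0 := by
  unfold stirlingFirst
  rw [Polynomial.coeff_zero_eq_eval_zero, Polynomial.eval_prod]
  refine Finset.prod_eq_zero (Finset.mem_range.2 (Nat.succ_pos n)) ?_
  simp

lemma st_succ (n k : ℕ) : stirlingFirst (n+1) (k+1)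
    = n * stirlingFirst n (k+1) + stirlingFirst n k := by
  unfold stirlingFirst
  rw [Finset.prod_range_succ, mul_add, Polynomial.coeff_add,
    Polynomial.coeff_mul_C, Polynomial.coeff_mul_X]
  ring

lemma st_one (n : ℕ) : stirlingFirst (n+1) 1 = n.factorial := by
  induction n with
  | zero => unfold stirlingFirst; simp
  | succ m ih =>
    rw [st_succ, ih, st_zero, Nat.factorial_succ]; ring

noncomputable def S (n k : ℕ) : ℝ := stirlingFirst (n+1) (k+1) / n.factorial

noncomputable def H (n : ℕ) : ℝ := (harmonic n : ℝ)

lemma H_succ (n : ℕ) : H (n+1) = H n + (n+1:ℝ)⁻¹ := by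
  unfold H; rw [harmonic_succ]; push_cast; ring

lemma H_nonneg (n : ℕ) : 0 ≤ H n := by
  cases n with
  | zero => simp [H, harmonic_zero]
  | succ m =>
    have := harmonic_pos (Nat.succ_ne_zero m)
    unfold H; exact_mod_cast this.le

lemma H_one : H 1 = 1 := by unfold H; norm_num [harmonic_succ, harmonic_zero]

lemma H_ge_one {n : ℕ} (hn : 1 ≤ n) : 1 ≤ H n := by
  obtain ⟨m, rfl⟩ := Nat.exists_eq_add_of_le hn
  induction m with
  | zero => rw [H_one]
  | succ p ih =>
    have := ih (by omega)
    have h2 : (0:ℝ) ≤ ((1+p)+1:ℝ)⁻¹ := by positivity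
    rw [show 1 + (p+1) = (1+p)+1 by ring, H_succ]
    push_cast at h2 ⊢
    linarith

lemma S_zero (n : ℕ) : S n 0 = 1 := by
  unfold S
  rw [st_one]
  exact div_self (by positivity)

lemma S_nonneg (n k : ℕ) : 0 ≤ S n k := by unfold S; positivity

lemma S_succ (n k : ℕ) : S (n+1) (k+1) = S n (k+1) + S n k / (n+1) := by
  unfold S
  rw [st_succ]
  have h1 : (0:ℝ) < n.factorial := by positivity
  have h2 : (0:ℝ) < (n:ℝ)+1 := by positivity
  rw [Nat.factorial_succ]
  push_cast
  field_simp

lemma S_one (n : ℕ) : S n 1 = H n := by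
  induction n with
  | zero =>
    unfold S stirlingFirst H
    simp [harmonic_zero, Polynomial.coeff_X]
  | succ m ih =>
    rw [S_succ, ih, S_zero, H_succ, one_div]

lemma binom_lower (Hv x : ℝ) (hH : 0 ≤ Hv) (hx : 0 ≤ x) (m : ℕ) :
    Hv^(m+1) + (m+1)*x*Hv^m ≤ (Hv+x)^(m+1) := by
  induction m with
  | zero => simp
  | succ p ih =>
    have key : Hv^(p+2) + ((p:ℝ)+2)*x*Hv^(p+1)
        ≤ (Hv+x) * (Hv^(p+1) + ((p:ℝ)+1)*x*Hv^p) := by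
      have expand : (Hv+x) * (Hv^(p+1) + ((p:ℝ)+1)*x*Hv^p)
          = Hv^(p+2) + ((p:ℝ)+2)*x*Hv^(p+1) + ((p:ℝ)+1)*(x*x*Hv^p) := by ring
      have hn : (0:ℝ) ≤ ((p:ℝ)+1)*(x*x*Hv^p) := by positivity
      linarith
    have key2 : (Hv+x) * (Hv^(p+1) + ((p:ℝ)+1)*x*Hv^p) ≤ (Hv+x)^(p+2) := by
      have hs : (0:ℝ) ≤ Hv + x := by linarith
      have h' := mul_le_mul_of_nonneg_left ih hs
      calc (Hv+x) * (Hv^(p+1) + ((p:ℝ)+1)*x*Hv^p) ≤ (Hv+x) * (Hv+x)^(p+1) := by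
            push_cast at h' ⊢; linarith
        _ = (Hv+x)^(p+2) := by ring
    push_cast
    linarith

lemma binom_upper (Hv x : ℝ) (hH : 1 ≤ Hv) (hx0 : 0 ≤ x) (hx : x ≤ 1) (m : ℕ) :
    (Hv+x)^(m+2) ≤ Hv^(m+2) + (m+2)*x*Hv^(m+1) + 3^(m+2)*x*Hv^m := by
  have hH0 : (0:ℝ) ≤ Hv := le_trans zero_le_one hH
  induction m with
  | zero =>
    have h0 : Hv^0 = (1:ℝ) := pow_zero Hv
    push_cast
    nlinarith
  | succ p ih =>
    have hHp : (0:ℝ) ≤ Hv^p := pow_nonneg hH0 p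
    have hHp1' : (0:ℝ) ≤ Hv^(p+1) := pow_nonneg hH0 (p+1)
    have hHp2' : (0:ℝ) ≤ Hv^(p+2) := pow_nonneg hH0 (p+2)
    have hCB : Hv^p ≤ Hv^(p+1) := by
      calc Hv^p = Hv^p * 1 := by ring
        _ ≤ Hv^p * Hv := by nlinarith
        _ = Hv^(p+1) := (pow_succ Hv p).symm
    have ht0 : (0:ℝ) < 3^(p+2) := by positivity
    have hp2t : ((p:ℝ)+2) ≤ 3^(p+2) := by
      have : (p+2) < 3^(p+2) := Nat.lt_pow_self (by norm_num)
      exact_mod_cast this.le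
    have hs : (0:ℝ) ≤ Hv + x := by linarith
    have step1 : (Hv+x)^(p+3) ≤ (Hv+x) * (Hv^(p+2) + ((p:ℝ)+2)*x*Hv^(p+1) + 3^(p+2)*x*Hv^p) := by
      have h' := mul_le_mul_of_nonneg_left ih hs
      calc (Hv+x)^(p+3) = (Hv+x) * (Hv+x)^(p+2) := by ring
        _ ≤ _ := by push_cast at h' ⊢; linarith
    have step2 : (Hv+x) * (Hv^(p+2) + ((p:ℝ)+2)*x*Hv^(p+1) + 3^(p+2)*x*Hv^p)
        ≤ Hv^(p+3) + ((p:ℝ)+3)*x*Hv^(p+2) + 3^(p+3)*x*Hv^(p+1) := by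
      have expand : (Hv+x) * (Hv^(p+2) + ((p:ℝ)+2)*x*Hv^(p+1) + 3^(p+2)*x*Hv^p)
          = Hv^(p+3) + ((p:ℝ)+3)*x*Hv^(p+2) + (3:ℝ)^(p+2)*(x*Hv^(p+1))
            + ((p:ℝ)+2)*(x*x*Hv^(p+1)) + (3:ℝ)^(p+2)*(x*x*Hv^p) := by ring
      have e5 : (3:ℝ)^(p+3)*x*Hv^(p+1) = 3*((3:ℝ)^(p+2)*(x*Hv^(p+1))) := by ring
      have hxx : x*x ≤ x := by nlinarith
      have hxxB : x*x*Hv^(p+1) ≤ x*Hv^(p+1) := mul_le_mul_of_nonneg_right hxx hHp1'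
      have hxxC : x*x*Hv^p ≤ x*Hv^(p+1) := by
        calc x*x*Hv^p ≤ x*x*Hv^(p+1) := by
              have := mul_le_mul_of_nonneg_left hCB (mul_nonneg hx0 hx0)
              linarith [this]
          _ ≤ x*Hv^(p+1) := hxxB
      have h1 : ((p:ℝ)+2)*(x*x*Hv^(p+1)) ≤ 3^(p+2)*(x*x*Hv^(p+1)) :=
        mul_le_mul_of_nonneg_right hp2t (by positivity)
      have h2 : (3:ℝ)^(p+2)*(x*x*Hv^(p+1)) ≤ 3^(p+2)*(x*Hv^(p+1)) :=
        mul_le_mul_of_nonneg_left hxxB ht0.le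
      have h3 : (3:ℝ)^(p+2)*(x*x*Hv^p) ≤ 3^(p+2)*(x*Hv^(p+1)) :=
        mul_le_mul_of_nonneg_left hxxC ht0.le
      linarith
    push_cast
    linarith

lemma S_init (k : ℕ) : S 0 (k+1) = 0 := by
  unfold S stirlingFirst
  simp [Polynomial.coeff_X]

lemma S_upper (n k : ℕ) : S n k ≤ H n ^ k / k.factorial := by
  induction n generalizing k with
  | zero =>
    cases k with
    | zero => rw [S_zero]; simp [H, harmonic_zero]
    | succ p =>
      rw [S_init]
      have h0 := H_nonneg 0
      positivity
  | succ m ih =>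
    cases k with
    | zero => rw [S_zero]; simp
    | succ p =>
      have hx : (0:ℝ) ≤ ((m:ℝ)+1)⁻¹ := by positivity
      have hHn := H_nonneg m
      have key := binom_lower (H m) (((m:ℝ)+1)⁻¹) hHn hx p
      have hkp : (0:ℝ) < ((p+1).factorial : ℝ) := by positivity
      have hkp0 : (0:ℝ) < (p.factorial : ℝ) := by positivity
      rw [S_succ, H_succ]
      have h1 := ih (p+1)
      have h2 := ih p
      have hfac : ((p+1).factorial : ℝ) = ((p:ℝ)+1) * p.factorial := by
        rw [Nat.factorial_succ]; push_cast; ring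
      have hdiv : S m p / ((m:ℝ)+1) ≤ (H m ^ p / p.factorial) * ((m:ℝ)+1)⁻¹ := by
        rw [div_eq_mul_inv]
        exact mul_le_mul_of_nonneg_right h2 hx
      have main : H m ^ (p+1) / ((p+1).factorial:ℝ) + (H m ^ p / p.factorial) * ((m:ℝ)+1)⁻¹
          ≤ (H m + ((m:ℝ)+1)⁻¹) ^ (p+1) / ((p+1).factorial:ℝ) := by
        rw [div_add' _ _ _ (ne_of_gt hkp), div_le_div_iff₀ hkp hkp]
        have e : H m ^ p / (p.factorial:ℝ) * ((m:ℝ)+1)⁻¹ * ((p+1).factorial:ℝ)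
            = ((p:ℝ)+1) * ((m:ℝ)+1)⁻¹ * H m ^ p := by
          rw [hfac]
          field_simp
        push_cast at key ⊢
        nlinarith [key, hkp]
      linarith

set_option maxHeartbeats 1000000 in
lemma S_lower : ∀ n, 1 ≤ n → ∀ k, H n ^ k / k.factorial - 4^(k+1) * H n ^ (k-1) ≤ S n k := by
  intro n
  induction n with
  | zero => omega
  | succ m ih =>
    intro hn k
    rcases Nat.eq_zero_or_pos m with hm0 | hm
    · -- n = 1
      subst hm0
      have hH1 : H 1 = 1 := H_one
      match k with
      | 0 => rw [S_zero, hH1]; norm_num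
      | 1 => rw [S_one, hH1]; norm_num
      | (q+2) =>
        have hS0 : S 1 (q+2) = 0 := by
          rw [S_succ, S_init, S_init]
          norm_num
        rw [hS0, hH1]
        have h4 : (1:ℝ) ≤ 4^(q+2+1) := one_le_pow₀ (by norm_num)
        have hfq : (1:ℝ) ≤ ((q+2).factorial:ℝ) := by
          exact_mod_cast Nat.one_le_iff_ne_zero.2 (Nat.factorial_ne_zero _)
        simp only [one_pow, mul_one]
        have hd : (1:ℝ) / ((q+2).factorial:ℝ) ≤ 1 := by
          rw [div_le_one (by linarith)]; linarith
        linarith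
    · -- m ≥ 1
      have IH := ih hm
      have hHm : 1 ≤ H m := H_ge_one hm
      have hH0 : (0:ℝ) ≤ H m := by linarith
      set x : ℝ := ((m:ℝ)+1)⁻¹ with hxdef
      have hx0 : (0:ℝ) < x := by positivity
      have hx1 : x ≤ 1 := by
        rw [hxdef, inv_le_one_iff₀]
        right
        have : (0:ℝ) ≤ (m:ℝ) := Nat.cast_nonneg m
        linarith
      match k with
      | 0 =>
        rw [S_zero]
        have h4 : (0:ℝ) < 4^(0+1) := by positivity
        have hp : (0:ℝ) ≤ H (m+1) ^ (0-1) := pow_nonneg (by rw [H_succ]; linarith) _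
        simp only [pow_zero, Nat.factorial_zero, Nat.cast_one, div_one]
        nlinarith
      | 1 =>
        rw [S_one]
        have hp : H (m+1) ^ (1-1) = 1 := pow_zero _
        rw [hp]
        simp only [pow_one, Nat.factorial_one, Nat.cast_one, div_one]
        have h4 : (0:ℝ) < 4^(1+1) := by positivity
        linarith
      | (q+2) =>
        have IHa : H m ^ (q+2) / ((q+2).factorial:ℝ) - 4^(q+3) * H m ^ (q+1) ≤ S m (q+2) :=
          IH (q+2)
        have IHb : H m ^ (q+1) / ((q+1).factorial:ℝ) - 4^(q+2) * H m ^ q ≤ S m (q+1) :=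
          IH (q+1)
        have hup := binom_upper (H m) x hHm hx0.le hx1 q
        have hlo := binom_lower (H m) x hH0 hx0.le q
        have hq2 : ((q+2).factorial : ℝ) = ((q:ℝ)+2) * ((q+1).factorial:ℝ) := by
          rw [Nat.factorial_succ]; push_cast; ring
        have hfq1 : (0:ℝ) < ((q+1).factorial:ℝ) := by positivity
        have hfq2 : (0:ℝ) < ((q+2).factorial:ℝ) := by positivity
        have hSx : S m (q+1) / ((m:ℝ)+1) = x * S m (q+1) := by
          rw [hxdef]; ring
        have key1 : H m ^ (q+2)/((q+2).factorial:ℝ) - 4^(q+3) * H m ^ (q+1)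
              + x * (H m ^ (q+1)/((q+1).factorial:ℝ) - 4^(q+2) * H m ^ q)
            ≤ S m (q+2) + x * S m (q+1) := by
          have hb := mul_le_mul_of_nonneg_left IHb hx0.le
          linarith
        have hdiv : (H m + x)^(q+2)/((q+2).factorial:ℝ)
            ≤ (H m ^(q+2) + ((q:ℝ)+2)*x*H m ^(q+1) + 3^(q+2)*x*H m ^q)/((q+2).factorial:ℝ) := by
          apply div_le_div_of_nonneg_right _ hfq2.le
          · push_cast at hup ⊢; linarith
        have expand2 : (H m ^(q+2) + ((q:ℝ)+2)*x*H m ^(q+1) + 3^(q+2)*x*H m ^q)/((q+2).factorial:ℝ)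
            = H m ^(q+2)/((q+2).factorial:ℝ) + x*(H m ^(q+1)/((q+1).factorial:ℝ))
              + (3:ℝ)^(q+2)/((q+2).factorial:ℝ) * (x*H m ^q) := by
          rw [hq2]
          field_simp
        have hq0 : (0:ℝ) ≤ H m ^ q := by positivity
        have hcond : (3:ℝ)^(q+2)/((q+2).factorial:ℝ) + 4^(q+2) ≤ 4^(q+3)*((q:ℝ)+1) := by
          have h34 : (3:ℝ)^(q+2) ≤ 4^(q+2) := by
            apply pow_le_pow_left₀ (by norm_num) (by norm_num)
          have hf1 : (1:ℝ) ≤ ((q+2).factorial:ℝ) := by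
            exact_mod_cast Nat.one_le_iff_ne_zero.2 (Nat.factorial_ne_zero _)
          have hdd : (3:ℝ)^(q+2)/((q+2).factorial:ℝ) ≤ 4^(q+2) := by
            rw [div_le_iff₀ hfq2]
            nlinarith [pow_nonneg (by norm_num : (0:ℝ) ≤ 3) (q+2),
              pow_nonneg (by norm_num : (0:ℝ) ≤ 4) (q+2)]
          have h4e : (4:ℝ)^(q+3) = 4 * 4^(q+2) := by ring
          have hq' : (0:ℝ) ≤ (q:ℝ) := Nat.cast_nonneg q
          nlinarith [pow_pos (by norm_num : (0:ℝ) < 4) (q+2)]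
        have hlo4 : (4:ℝ)^(q+3) * (H m ^(q+1) + ((q:ℝ)+1)*x*H m ^q)
            ≤ 4^(q+3) * (H m + x)^(q+1) := by
          apply mul_le_mul_of_nonneg_left _ (by positivity)
          push_cast at hlo ⊢
          linarith
        have hc2 := mul_le_mul_of_nonneg_right hcond (mul_nonneg hx0.le hq0)
        have hdiv' := hdiv.trans_eq expand2
        have goal2 : (H m + x)^(q+2)/((q+2).factorial:ℝ) - 4^(q+3) * (H m + x)^(q+1)
            ≤ H m ^ (q+2)/((q+2).factorial:ℝ) - 4^(q+3) * H m ^ (q+1)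
              + x * (H m ^ (q+1)/((q+1).factorial:ℝ) - 4^(q+2) * H m ^ q) := by
          linarith [hdiv', hlo4, hc2]
        have final := le_trans goal2 key1
        rw [S_succ, H_succ, hSx]
        show (H m + x)^(q+2)/((q+2).factorial:ℝ) - 4^(q+3) * (H m + x)^(q+1)
            ≤ S m (q+2) + x * S m (q+1)
        exact final

lemma st_S (m k : ℕ) : (stirlingFirst (m+1) (k+1) : ℝ) = S m k * m.factorial := by
  unfold S
  have : (m.factorial : ℝ) ≠ 0 := by positivity
  field_simp

lemma sum_bounds (e m : ℕ) (hm : 1 ≤ m) :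
    H m^(e+1)/((e+1).factorial:ℝ) - 4^(e+2)*H m^e
      ≤ (∑ j ∈ Finset.range ((e+1)/2+1), (stirlingFirst (m+1) (e+2-2*j) : ℝ)) / m.factorial
    ∧ (∑ j ∈ Finset.range ((e+1)/2+1), (stirlingFirst (m+1) (e+2-2*j) : ℝ)) / m.factorial
      ≤ H m^(e+1)/((e+1).factorial:ℝ) + (e+1)*H m^e := by
  have hF : (0:ℝ) < m.factorial := by positivity
  have hHm : 1 ≤ H m := H_ge_one hm
  have hH0 : (0:ℝ) ≤ H m := by linarith
  have hsplit : (∑ j ∈ Finset.range ((e+1)/2+1), (stirlingFirst (m+1) (e+2-2*j) : ℝ))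
      = (∑ j ∈ Finset.range ((e+1)/2), (stirlingFirst (m+1) (e+2-2*(j+1)) : ℝ))
        + (stirlingFirst (m+1) (e+2) : ℝ) := by
    rw [Finset.sum_range_succ']
    norm_num
  have hhead : (stirlingFirst (m+1) (e+2) : ℝ) = S m (e+1) * m.factorial := st_S m (e+1)
  -- lower bound
  have hlow : (H m^(e+1)/((e+1).factorial:ℝ) - 4^(e+2)*H m^e) * m.factorial
      ≤ (∑ j ∈ Finset.range ((e+1)/2+1), (stirlingFirst (m+1) (e+2-2*j) : ℝ)) := by
    rw [hsplit, hhead]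
    have htail : (0:ℝ) ≤ ∑ j ∈ Finset.range ((e+1)/2), (stirlingFirst (m+1) (e+2-2*(j+1)) : ℝ) :=
      Finset.sum_nonneg fun j _ => Nat.cast_nonneg _
    have hSl := S_lower m hm (e+1)
    have : (H m ^ (e+1) / ((e+1).factorial:ℝ) - 4 ^ (e+2) * H m ^ e) ≤ S m (e+1) := by
      have he : (e+1) - 1 = e := rfl
      simpa [he] using hSl
    nlinarith [mul_le_mul_of_nonneg_right this hF.le]
  -- upper bound
  have hup : (∑ j ∈ Finset.range ((e+1)/2+1), (stirlingFirst (m+1) (e+2-2*j) : ℝ))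
      ≤ (H m^(e+1)/((e+1).factorial:ℝ) + (e+1)*H m^e) * m.factorial := by
    rw [hsplit, hhead]
    have hheadle : S m (e+1) * (m.factorial:ℝ) ≤ H m^(e+1)/((e+1).factorial:ℝ) * m.factorial :=
      mul_le_mul_of_nonneg_right (S_upper m (e+1)) hF.le
    have htailterm : ∀ j ∈ Finset.range ((e+1)/2),
        (stirlingFirst (m+1) (e+2-2*(j+1)) : ℝ) ≤ H m^e * m.factorial := by
      intro j hj
      have hj' : j < (e+1)/2 := Finset.mem_range.1 hj
      have hk : e+2-2*(j+1) = (e-2*j-1)+1 := by omega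
      rw [hk, st_S]
      have h1 : S m (e-2*j-1) ≤ H m ^ (e-2*j-1) / ((e-2*j-1).factorial:ℝ) := S_upper m _
      have h2 : H m ^ (e-2*j-1) / ((e-2*j-1).factorial:ℝ) ≤ H m ^ (e-2*j-1) := by
        have hf1 : (1:ℝ) ≤ ((e-2*j-1).factorial:ℝ) := by
          exact_mod_cast Nat.one_le_iff_ne_zero.2 (Nat.factorial_ne_zero _)
        have hp : (0:ℝ) ≤ H m ^ (e-2*j-1) := by positivity
        calc H m ^ (e-2*j-1) / ((e-2*j-1).factorial:ℝ)
            ≤ H m ^ (e-2*j-1) / 1 := by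
              apply div_le_div_of_nonneg_left hp (by norm_num) hf1
          _ = H m ^ (e-2*j-1) := by rw [div_one]
      have h3 : H m ^ (e-2*j-1) ≤ H m ^ e := by
        apply pow_le_pow_right₀ hHm
        omega
      exact mul_le_mul_of_nonneg_right (h1.trans (h2.trans h3)) hF.le
    have htailsum : (∑ j ∈ Finset.range ((e+1)/2), (stirlingFirst (m+1) (e+2-2*(j+1)) : ℝ))
        ≤ ((e+1)/2 : ℕ) * (H m^e * m.factorial) := by
      calc _ ≤ ∑ _j ∈ Finset.range ((e+1)/2), (H m^e * (m.factorial:ℝ)) :=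
            Finset.sum_le_sum htailterm
        _ = ((e+1)/2 : ℕ) * (H m^e * m.factorial) := by
            rw [Finset.sum_const, Finset.card_range]; simp [nsmul_eq_mul]
    have hcard : (((e+1)/2 : ℕ) : ℝ) ≤ (e:ℝ)+1 := by
      have : (e+1)/2 ≤ e+1 := Nat.div_le_self _ _
      exact_mod_cast this
    have hpos : (0:ℝ) ≤ H m^e * m.factorial := by positivity
    nlinarith [mul_le_mul_of_nonneg_right hcard hpos]
  constructor
  · rw [le_div_iff₀ hF]; exact hlow
  · rw [div_le_iff₀ hF]; exact hup

noncomputable def q (n : ℕ) : ℝ := H (n-1) / Real.log n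

lemma tendsto_invlog : Filter.Tendsto (fun n : ℕ => (Real.log n)⁻¹) Filter.atTop (nhds 0) := by
  have h : Filter.Tendsto (fun n : ℕ => Real.log n) Filter.atTop Filter.atTop :=
    Real.tendsto_log_atTop.comp tendsto_natCast_atTop_atTop
  exact h.inv_tendsto_atTop

lemma log_pos_of_ge3 {n : ℕ} (hn : 3 ≤ n) : 0 < Real.log n := by
  apply Real.log_pos
  exact_mod_cast by omega

lemma q_lower {n : ℕ} (hn : 3 ≤ n) : 1 ≤ q n := by
  have hL := log_pos_of_ge3 hn
  have h1 : Real.log n ≤ H (n-1) := by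
    have := log_add_one_le_harmonic (n-1)
    have he : (n-1)+1 = n := by omega
    rw [he] at this
    exact_mod_cast this
  rw [q, le_div_iff₀ hL]
  linarith

lemma q_upper {n : ℕ} (hn : 3 ≤ n) : q n ≤ 1 + (Real.log n)⁻¹ := by
  have hL := log_pos_of_ge3 hn
  have h1 : H (n-1) ≤ 1 + Real.log n := by
    have h2 : (harmonic (n-1) : ℝ) ≤ 1 + Real.log ((n-1 : ℕ) : ℝ) := harmonic_le_one_add_log (n-1)
    have h3 : Real.log ((n-1 : ℕ) : ℝ) ≤ Real.log n := by
      apply Real.log_le_log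
      · have : (2:ℝ) ≤ ((n-1:ℕ):ℝ) := by exact_mod_cast (by omega : 2 ≤ n - 1)
        linarith
      · exact_mod_cast (by omega : n - 1 ≤ n)
    rw [H]
    linarith
  rw [q, div_le_iff₀ hL]
  have : (1 + (Real.log n)⁻¹) * Real.log n = Real.log n + 1 := by
    field_simp
  rw [this]
  linarith

lemma tendsto_q : Filter.Tendsto q Filter.atTop (nhds 1) := by
  apply tendsto_of_tendsto_of_tendsto_of_le_of_le' (g := fun _ => (1:ℝ))
      (h := fun n : ℕ => 1 + (Real.log n)⁻¹) tendsto_const_nhds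
  · simpa using (tendsto_const_nhds (x := (1:ℝ)) (f := Filter.atTop)).add tendsto_invlog
  · exact Filter.eventually_atTop.2 ⟨3, fun n hn => q_lower hn⟩
  · exact Filter.eventually_atTop.2 ⟨3, fun n hn => q_upper hn⟩

lemma ratio_simp (a f F L N : ℝ) (hf : f ≠ 0) (hF : F ≠ 0) (hL : L ≠ 0) (hN : N ≠ 0) (p : ℕ) :
    (2*a/(N*f)) / (2*L^p/(F*N)) = (a/f)*(F/L^p) := by
  have hLp : L^p ≠ 0 := pow_ne_zero _ hL
  field_simp


end Aux

/-- For fixed `d ≥ 2`, the non-absorption probability of a random walk bridge,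
`(2/n!)(⟦n,d⟧ + ⟦n,d−2⟧ + ⋯)` (sum over `k = d, d−2, …` with `k ≥ 1`), is asymptotically
equivalent to `2 (log n)^{d−1} / ((d−1)! n)` as `n → ∞`. -/
theorem bridge_nonabsorption_asymptotics (d : ℕ) (hd : 2 ≤ d) :
    Tendsto (fun n : ℕ =>
        (2 * (∑ j ∈ Finset.range ((d - 1) / 2 + 1),
          (stirlingFirst n (d - 2 * j) : ℝ)) / n.factorial)
        / (2 * (Real.log n) ^ (d - 1) / ((d - 1).factorial * n)))
      atTop (nhds 1) := by
  obtain ⟨e, rfl⟩ : ∃ e, d = e + 2 := ⟨d - 2, by omega⟩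
  set F : ℝ := ((e+1).factorial : ℝ) with hFdef
  have hF : (0:ℝ) < F := by positivity
  set expr : ℕ → ℝ := fun n =>
    (2 * (∑ j ∈ Finset.range ((e + 2 - 1) / 2 + 1),
      (stirlingFirst n (e + 2 - 2 * j) : ℝ)) / n.factorial)
    / (2 * (Real.log n) ^ (e + 2 - 1) / ((e + 2 - 1).factorial * n)) with hexprdef
  show Tendsto expr atTop (nhds 1)
  set C1 : ℝ := F * 4^(e+2) with hC1def
  set C2 : ℝ := F * ((e:ℝ)+1) with hC2def
  set Lo : ℕ → ℝ := fun n => q n^(e+1) - C1 * (q n^e * (Real.log n)⁻¹) with hLodef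
  set Up : ℕ → ℝ := fun n => q n^(e+1) + C2 * (q n^e * (Real.log n)⁻¹) with hUpdef
  have hLoT : Tendsto Lo atTop (nhds 1) := by
    have h := (tendsto_q.pow (e+1)).sub
      ((tendsto_const_nhds (x := C1)).mul ((tendsto_q.pow e).mul tendsto_invlog))
    have he : (1:ℝ)^(e+1) - C1*((1:ℝ)^e*0) = 1 := by norm_num
    rw [he] at h
    exact h
  have hUpT : Tendsto Up atTop (nhds 1) := by
    have h := (tendsto_q.pow (e+1)).add
      ((tendsto_const_nhds (x := C2)).mul ((tendsto_q.pow e).mul tendsto_invlog))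
    have he : (1:ℝ)^(e+1) + C2*((1:ℝ)^e*0) = 1 := by norm_num
    rw [he] at h
    exact h
  apply tendsto_of_tendsto_of_tendsto_of_le_of_le' hLoT hUpT
  · -- Lo ≤ expr eventually
    rw [Filter.eventually_atTop]
    refine ⟨3, fun n hn => ?_⟩
    obtain ⟨m, rfl⟩ : ∃ m, n = m + 1 := ⟨n - 1, by omega⟩
    have hm : 1 ≤ m := by omega
    have hL : (0:ℝ) < Real.log (m+1:ℕ) := log_pos_of_ge3 hn
    have hLp : (0:ℝ) < (Real.log (m+1:ℕ))^(e+1) := by positivity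
    have hfm : (0:ℝ) < (m.factorial:ℝ) := by positivity
    have hn0 : (0:ℝ) < ((m+1:ℕ):ℝ) := by positivity
    have hfn : ((m+1).factorial : ℝ) = ((m+1:ℕ):ℝ) * (m.factorial:ℝ) := by
      rw [Nat.factorial_succ]; push_cast; ring
    set Ssum : ℝ := ∑ j ∈ Finset.range ((e+1)/2+1), (stirlingFirst (m+1) (e+2-2*j) : ℝ) with hSdef
    have hexpr : expr (m+1) = (Ssum / m.factorial) * (F / (Real.log (m+1:ℕ))^(e+1)) := by
      show (2 * Ssum / (m+1).factorial) / (2 * (Real.log (m+1:ℕ))^(e+1) / (F * ((m+1:ℕ):ℝ)))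
          = (Ssum / m.factorial) * (F / (Real.log (m+1:ℕ))^(e+1))
      rw [hfn]
      exact ratio_simp Ssum _ _ _ _ hfm.ne' hF.ne' hL.ne' hn0.ne' (e+1)
    have hq : q (m+1) = H m / Real.log (m+1:ℕ) := rfl
    have hbounds := sum_bounds e m hm
    have hc : (0:ℝ) < F / (Real.log (m+1:ℕ))^(e+1) := by positivity
    have hLoeq : Lo (m+1) = (H m^(e+1)/F - 4^(e+2)*H m^e) * (F / (Real.log (m+1:ℕ))^(e+1)) := by
      show q (m+1)^(e+1) - C1 * (q (m+1)^e * (Real.log (m+1:ℕ))⁻¹)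
          = (H m^(e+1)/F - 4^(e+2)*H m^e) * (F / (Real.log (m+1:ℕ))^(e+1))
      rw [hq, hC1def, div_pow, div_pow]
      field_simp
      ring
    rw [hexpr, hLoeq]
    exact mul_le_mul_of_nonneg_right hbounds.1 hc.le
  · -- expr ≤ Up eventually
    rw [Filter.eventually_atTop]
    refine ⟨3, fun n hn => ?_⟩
    obtain ⟨m, rfl⟩ : ∃ m, n = m + 1 := ⟨n - 1, by omega⟩
    have hm : 1 ≤ m := by omega
    have hL : (0:ℝ) < Real.log (m+1:ℕ) := log_pos_of_ge3 hn
    have hLp : (0:ℝ) < (Real.log (m+1:ℕ))^(e+1) := by positivity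
    have hfm : (0:ℝ) < (m.factorial:ℝ) := by positivity
    have hn0 : (0:ℝ) < ((m+1:ℕ):ℝ) := by positivity
    have hfn : ((m+1).factorial : ℝ) = ((m+1:ℕ):ℝ) * (m.factorial:ℝ) := by
      rw [Nat.factorial_succ]; push_cast; ring
    set Ssum : ℝ := ∑ j ∈ Finset.range ((e+1)/2+1), (stirlingFirst (m+1) (e+2-2*j) : ℝ) with hSdef
    have hexpr : expr (m+1) = (Ssum / m.factorial) * (F / (Real.log (m+1:ℕ))^(e+1)) := by
      show (2 * Ssum / (m+1).factorial) / (2 * (Real.log (m+1:ℕ))^(e+1) / (F * ((m+1:ℕ):ℝ)))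
          = (Ssum / m.factorial) * (F / (Real.log (m+1:ℕ))^(e+1))
      rw [hfn]
      exact ratio_simp Ssum _ _ _ _ hfm.ne' hF.ne' hL.ne' hn0.ne' (e+1)
    have hq : q (m+1) = H m / Real.log (m+1:ℕ) := rfl
    have hbounds := sum_bounds e m hm
    have hc : (0:ℝ) < F / (Real.log (m+1:ℕ))^(e+1) := by positivity
    have hUpeq : Up (m+1) = (H m^(e+1)/F + ((e:ℝ)+1)*H m^e) * (F / (Real.log (m+1:ℕ))^(e+1)) := by
      show q (m+1)^(e+1) + C2 * (q (m+1)^e * (Real.log (m+1:ℕ))⁻¹)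
          = (H m^(e+1)/F + ((e:ℝ)+1)*H m^e) * (F / (Real.log (m+1:ℕ))^(e+1))
      rw [hq, hC2def, div_pow, div_pow]
      field_simp
      ring
    rw [hexpr, hUpeq]
    have h2 := hbounds.2
    have : Ssum / m.factorial ≤ H m^(e+1)/F + ((e:ℝ)+1)*H m^e := by
      push_cast at h2 ⊢
      exact h2
    exact mul_le_mul_of_nonneg_right this hc.le
end

section
/- Let X_n be an integer-valued random variable with P[X_n = k] = B(n,k)/(2^n n!) for k = 0, …, n, so that E[e^{z X_n}] = (1/(2^{2n} n!)) · (e^z)_{2n} / ((e^z/2))_n, where (x)_m = x(x+1)⋯(x+m−1) is the rising factorial. Then, uniformly on compact subsets of ℂ, lim_{n→∞} E[e^{z X_n}] / exp(((1/2) log n)(e^z − 1)) = 2^{e^z} Γ(e^z/2) / (2√π Γ(e^z)), where by the Legendre duplication formula the right-hand side equals the entire function 1/Γ((e^z + 1)/2). -/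
set_option maxHeartbeats 1000000

open Finset Filter Topology

/-- The moment generating function `E[e^{z X_n}]` of the random variable `X_n` with
`P[X_n = k] = B(n,k)/(2^n n!)`, `k = 0, …, n`. -/
noncomputable def Bmgf (n : ℕ) (z : ℂ) : ℂ :=
  ∑ k ∈ Finset.range (n + 1),
    ((Bcoef n k : ℂ) / (2 ^ n * n.factorial)) * Complex.exp (z * k)

/-- The rising factorial `(x)_m = x(x+1)⋯(x+m−1)`. -/
noncomputable def risingFactorial (x : ℂ) (m : ℕ) : ℂ :=
  ∏ i ∈ Finset.range m, (x + i)

lemma L1 (n : ℕ) (x : ℂ) :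
    ∑ k ∈ range (n+1), (Bcoef n k : ℂ) * x ^ k
      = ∏ i ∈ range n, (x + ((2*i+1 : ℕ) : ℂ)) := by
  set p : Polynomial ℕ := ∏ i ∈ range n, (Polynomial.X + Polynomial.C (2*i+1)) with hp
  set q : Polynomial ℂ := p.map (Nat.castRingHom ℂ) with hqdef
  have hq : q = ∏ i ∈ range n, (Polynomial.X + Polynomial.C ((2*i+1 : ℕ) : ℂ)) := by
    rw [hqdef, hp, Polynomial.map_prod]
    refine Finset.prod_congr rfl fun i _ => ?_
    rw [Polynomial.map_add, Polynomial.map_X, Polynomial.map_C]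
    norm_num
  have hdeg : q.natDegree < n + 1 := by
    have : q.natDegree ≤ n := by
      rw [hq]
      refine le_trans (Polynomial.natDegree_prod_le _ _) ?_
      refine le_trans (Finset.sum_le_card_nsmul _ _ 1 fun i _ => ?_) (by simp)
      exact le_of_eq (Polynomial.natDegree_X_add_C _)
    omega
  have h1 : q.eval x = ∑ k ∈ range (n+1), (Bcoef n k : ℂ) * x ^ k := by
    rw [Polynomial.eval_eq_sum_range' hdeg]
    refine Finset.sum_congr rfl fun k _ => ?_
    rw [hqdef, Polynomial.coeff_map]
    rfl
  have h2 : q.eval x = ∏ i ∈ range n, (x + ((2*i+1 : ℕ) : ℂ)) := by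
    rw [hq, Polynomial.eval_prod]
    simp
  rw [← h1, h2]

lemma L2 (n : ℕ) (x : ℂ) :
    ∏ i ∈ range (2*n), (x + (i : ℂ))
      = 2^n * (∏ i ∈ range n, (x/2 + (i : ℂ))) * ∏ i ∈ range n, (x + ((2*i+1 : ℕ) : ℂ)) := by
  induction n with
  | zero => simp
  | succ n ih =>
    have h2n : 2 * (n+1) = (2*n) + 1 + 1 := by ring
    rw [h2n, Finset.prod_range_succ, Finset.prod_range_succ, ih,
      Finset.prod_range_succ, Finset.prod_range_succ]
    push_cast
    ring

lemma L3 (n : ℕ) (z : ℂ) :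
    Bmgf n z = (∏ i ∈ range n, ((Complex.exp z + 1)/2 + (i : ℂ))) / n.factorial := by
  have hD : ((2:ℂ)^n * n.factorial) ≠ 0 :=
    mul_ne_zero (pow_ne_zero n two_ne_zero) (Nat.cast_ne_zero.mpr n.factorial_ne_zero)
  have h0 : Bmgf n z = (∑ k ∈ range (n+1), (Bcoef n k : ℂ) * (Complex.exp z) ^ k)
      / (2^n * n.factorial) := by
    rw [Bmgf, Finset.sum_div]
    refine Finset.sum_congr rfl fun k _ => ?_
    rw [mul_comm z (k:ℂ), Complex.exp_nat_mul]
    ring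
  have h1 : ∏ i ∈ range n, (Complex.exp z + ((2*i+1 : ℕ) : ℂ))
      = 2^n * ∏ i ∈ range n, ((Complex.exp z + 1)/2 + (i : ℂ)) := by
    have : ∀ i ∈ range n, (Complex.exp z + ((2*i+1 : ℕ) : ℂ))
        = 2 * ((Complex.exp z + 1)/2 + (i : ℂ)) := by
      intro i _
      push_cast
      ring
    rw [Finset.prod_congr rfl this, Finset.prod_mul_distrib, Finset.prod_const,
      Finset.card_range]
  rw [h0, L1, h1, mul_div_mul_left _ _ (pow_ne_zero n (two_ne_zero : (2:ℂ) ≠ 0))]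

lemma Bmgf_mul_eq (n : ℕ) (z : ℂ) :
    Bmgf n z * ((2:ℂ)^n * n.factorial)
      = ∏ i ∈ range n, (Complex.exp z + ((2*i+1 : ℕ) : ℂ)) := by
  have hD : ((2:ℂ)^n * n.factorial) ≠ 0 :=
    mul_ne_zero (pow_ne_zero n two_ne_zero) (Nat.cast_ne_zero.mpr n.factorial_ne_zero)
  have h0 : Bmgf n z = (∑ k ∈ range (n+1), (Bcoef n k : ℂ) * (Complex.exp z) ^ k)
      / (2^n * n.factorial) := by
    rw [Bmgf, Finset.sum_div]
    refine Finset.sum_congr rfl fun k _ => ?_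
    rw [mul_comm z (k:ℂ), Complex.exp_nat_mul]
    ring
  rw [h0, div_mul_cancel₀ _ hD, L1]

noncomputable def Hfun (n : ℕ) (w : ℂ) : ℂ :=
  (∏ i ∈ Finset.range n, (w + i)) / n.factorial * Complex.exp (-(Real.log n : ℂ) * (w - 1))

noncomputable def cseq (n : ℕ) : ℝ := (∑ k ∈ Finset.Ico 1 n, (k : ℝ)⁻¹) - Real.log n

lemma cseq_tendsto : Tendsto cseq atTop (𝓝 Real.eulerMascheroniConstant) := by
  have h := Real.tendsto_eulerMascheroniSeq.comp (tendsto_sub_atTop_nat 1)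
  refine h.congr' ?_
  filter_upwards [eventually_ge_atTop 1] with n hn
  show Real.eulerMascheroniSeq (n - 1) = cseq n
  rw [Real.eulerMascheroniSeq, cseq]
  have h1 : ((n - 1 : ℕ) : ℝ) + 1 = (n : ℝ) := by
    have h := Nat.sub_add_cancel hn
    exact_mod_cast congrArg (Nat.cast : ℕ → ℝ) h
  have h2 : ((harmonic (n-1) : ℚ) : ℝ) = ∑ k ∈ Finset.Ico 1 n, (k : ℝ)⁻¹ := by
    rw [harmonic]
    push_cast
    rw [Finset.sum_Ico_eq_sum_range]
    refine Finset.sum_congr rfl fun i _ => ?_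
    norm_num [add_comm]
  rw [h2, h1]

lemma P1 (n : ℕ) (hn : 1 ≤ n) (w : ℂ) :
    Hfun n w = w * Complex.exp ((cseq n : ℂ) * w)
      * ∏ k ∈ Finset.Ico 1 n, ((1 + w / k) * Complex.exp (-(w / k))) := by
  obtain ⟨m, rfl⟩ : ∃ m, n = m + 1 := ⟨n - 1, by omega⟩
  set n := m + 1
  have hn0 : (0:ℝ) < n := by positivity
  have hLn : Complex.exp (-(Real.log n : ℂ) * (w - 1))
      = Complex.exp (-((Real.log n : ℂ) * w)) * n := by
    rw [show -(Real.log n : ℂ) * (w - 1) = -((Real.log n : ℂ) * w) + (Real.log n : ℝ) from by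
      push_cast; ring, Complex.exp_add]
    congr 1
    rw [← Complex.ofReal_exp, Real.exp_log hn0]
    norm_num
  have hsplit : ∏ i ∈ Finset.range n, (w + i)
      = w * ∏ k ∈ Finset.Ico 1 n, (w + k) := by
    rw [Finset.range_eq_Ico, Finset.prod_eq_prod_Ico_succ_bot (by omega : 0 < n)]
    norm_num
  have hfact : ∏ k ∈ Finset.Ico 1 n, (k : ℂ) = (m.factorial : ℂ) := by
    rw [← Nat.cast_prod]
    congr 1
    exact Finset.prod_Ico_id_eq_factorial m
  have hE : ∏ k ∈ Finset.Ico 1 n, ((1 + w / k) * Complex.exp (-(w / k)))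
      = (∏ k ∈ Finset.Ico 1 n, (w + k)) / (m.factorial : ℂ)
        * Complex.exp (-(w * ((∑ k ∈ Finset.Ico 1 n, (k : ℝ)⁻¹ : ℝ) : ℂ))) := by
    rw [Finset.prod_mul_distrib]
    congr 1
    · rw [← hfact, ← Finset.prod_div_distrib]
      refine Finset.prod_congr rfl fun k hk => ?_
      have hk0 : (k : ℂ) ≠ 0 := by
        have := (Finset.mem_Ico.mp hk).1
        exact_mod_cast Nat.cast_ne_zero.mpr (by omega)
      field_simp
      ring
    · rw [← Complex.exp_sum]
      congr 1
      push_cast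
      rw [Finset.mul_sum, ← Finset.sum_neg_distrib]
      exact Finset.sum_congr rfl fun k _ => by rw [div_eq_mul_inv]
  rw [Hfun, hLn, hsplit, hE]
  have hcs : (cseq n : ℂ) = ((∑ k ∈ Finset.Ico 1 n, (k : ℝ)⁻¹ : ℝ) : ℂ) - (Real.log n : ℂ) := by
    rw [cseq]; push_cast; ring
  rw [hcs]
  have hfac2 : (n.factorial : ℂ) = n * m.factorial := by
    rw [Nat.factorial_succ]; simp only [n]; push_cast; ring
  have hne1 : (m.factorial : ℂ) ≠ 0 := Nat.cast_ne_zero.mpr m.factorial_ne_zero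
  have hne2 : ((n:ℕ) : ℂ) ≠ 0 := Nat.cast_ne_zero.mpr (by omega)
  rw [hfac2]
  set S : ℂ := ((∑ k ∈ Finset.Ico 1 n, (k : ℝ)⁻¹ : ℝ) : ℂ) with hS
  set L : ℂ := (Real.log n : ℂ) with hL
  have e1 : Complex.exp ((S - L) * w) = Complex.exp (S*w) * Complex.exp (-(L*w)) := by
    rw [← Complex.exp_add]; congr 1; ring
  have e2 : Complex.exp (-(w*S)) = (Complex.exp (S*w))⁻¹ := by
    rw [← Complex.exp_neg]; congr 1; ring
  rw [e1, e2]
  have hex : Complex.exp (S*w) ≠ 0 := Complex.exp_ne_zero _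
  field_simp


lemma norm_exp_le' (z : ℂ) : ‖Complex.exp z‖ ≤ Real.exp ‖z‖ := by
  rw [Complex.norm_exp]
  exact Real.exp_le_exp.mpr (Complex.re_le_norm z)

lemma sum_inv_sq_le (a b : ℕ) (ha : 1 ≤ a) :
    ∑ k ∈ Finset.Ico a b, ((k:ℝ)⁻¹)^2 ≤ 2 / a := by
  have ha0 : (0:ℝ) < a := by exact_mod_cast ha
  rcases le_or_gt a b with hab | hab
  · have tele : ∑ k ∈ Finset.Ico a b, (2*((k:ℝ)⁻¹ - ((k+1:ℕ):ℝ)⁻¹))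
        = 2 * ((a:ℝ)⁻¹ - (b:ℝ)⁻¹) := by
      rw [← Finset.mul_sum]
      congr 1
      rw [Finset.sum_Ico_eq_sum_range]
      have : ∀ i, ((a + i : ℕ):ℝ)⁻¹ - ((a + i + 1 : ℕ):ℝ)⁻¹
          = (fun j : ℕ => ((a + j : ℕ):ℝ)⁻¹) i - (fun j : ℕ => ((a + j : ℕ):ℝ)⁻¹) (i+1) := by
        intro i; simp [add_assoc]
      calc ∑ i ∈ Finset.range (b - a), (((a + i : ℕ):ℝ)⁻¹ - ((a + i + 1 : ℕ):ℝ)⁻¹)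
          = ∑ i ∈ Finset.range (b - a),
            ((fun j : ℕ => ((a + j : ℕ):ℝ)⁻¹) i - (fun j : ℕ => ((a + j : ℕ):ℝ)⁻¹) (i+1)) :=
            Finset.sum_congr rfl fun i _ => this i
        _ = ((a + 0 : ℕ):ℝ)⁻¹ - ((a + (b - a) : ℕ):ℝ)⁻¹ := Finset.sum_range_sub' _ _
        _ = (a:ℝ)⁻¹ - (b:ℝ)⁻¹ := by rw [Nat.add_zero, Nat.add_sub_cancel' hab]
    have hterm : ∀ k ∈ Finset.Ico a b, ((k:ℝ)⁻¹)^2 ≤ 2*((k:ℝ)⁻¹ - ((k+1:ℕ):ℝ)⁻¹) := by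
      intro k hk
      have hk1 : 1 ≤ k := le_trans ha (Finset.mem_Ico.mp hk).1
      have hk0 : (0:ℝ) < k := by exact_mod_cast hk1
      have hk1' : (1:ℝ) ≤ k := by exact_mod_cast hk1
      have h1 : (k:ℝ)⁻¹ - ((k+1:ℕ):ℝ)⁻¹ = 1 / ((k:ℝ)*((k:ℝ)+1)) := by
        push_cast
        field_simp
        ring
      rw [h1, inv_pow, inv_eq_one_div, ← mul_div_assoc, mul_one, div_le_div_iff₀ (by positivity) (by positivity)]
      nlinarith
    calc ∑ k ∈ Finset.Ico a b, ((k:ℝ)⁻¹)^2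
        ≤ ∑ k ∈ Finset.Ico a b, (2*((k:ℝ)⁻¹ - ((k+1:ℕ):ℝ)⁻¹)) := Finset.sum_le_sum hterm
      _ = 2 * ((a:ℝ)⁻¹ - (b:ℝ)⁻¹) := tele
      _ ≤ 2 / a := by
          have hb0 : (0:ℝ) ≤ (b:ℝ)⁻¹ := by positivity
          rw [div_eq_mul_inv]
          nlinarith
  · rw [Finset.Ico_eq_empty (by omega)]
    simp
    positivity


lemma Hfun_tendsto (w : ℂ) :
    Tendsto (fun n => Hfun n w) atTop (𝓝 (1 / Complex.Gamma w)) := by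
  by_cases hw : ∃ m : ℕ, w = -m
  · obtain ⟨m, rfl⟩ := hw
    rw [Complex.Gamma_neg_nat_eq_zero, div_zero]
    refine Tendsto.congr' ?_ tendsto_const_nhds
    filter_upwards [eventually_ge_atTop (m+1)] with n hn
    have hmem : m ∈ Finset.range n := Finset.mem_range.mpr (by omega)
    have : ∏ i ∈ Finset.range n, (-(m:ℂ) + i) = 0 :=
      Finset.prod_eq_zero hmem (by ring)
    rw [Hfun, this, zero_div, zero_mul]
  · push_neg at hw
    have hΓ : Complex.Gamma w ≠ 0 := Complex.Gamma_ne_zero hw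
    have hwn : ∀ n : ℕ, w + n ≠ 0 := by
      intro n h
      exact hw n (by linear_combination h)
    have hid : ∀ n : ℕ, 1 ≤ n →
        Hfun n w = ((n:ℂ)/(w + n)) * (Complex.GammaSeq w n)⁻¹ := by
      intro n hn
      have hn0 : (0:ℝ) < n := by exact_mod_cast hn
      have hnC : ((n:ℕ):ℂ) ≠ 0 := Nat.cast_ne_zero.mpr (by omega)
      have hpow : ((n:ℕ):ℂ) ^ w = Complex.exp ((Real.log n : ℂ) * w) := by
        rw [Complex.cpow_def_of_ne_zero hnC]
        congr 2
        rw [← Complex.ofReal_natCast, ← Complex.ofReal_log (le_of_lt hn0)]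
      have hprodne : ∏ j ∈ Finset.range (n+1), (w + j) ≠ 0 :=
        Finset.prod_ne_zero_iff.mpr fun j _ => hwn j
      rw [Hfun, Complex.GammaSeq, hpow, Finset.prod_range_succ]
      have hfacne : ((n.factorial : ℕ):ℂ) ≠ 0 := Nat.cast_ne_zero.mpr n.factorial_ne_zero
      have hexpne : Complex.exp ((Real.log n : ℂ) * w) ≠ 0 := Complex.exp_ne_zero _
      have hLn : Complex.exp (-(Real.log n : ℂ) * (w - 1))
          = (Complex.exp ((Real.log n : ℂ) * w))⁻¹ * n := by
        rw [show -(Real.log n : ℂ) * (w - 1) = -((Real.log n : ℂ) * w) + (Real.log n : ℝ) from by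
          push_cast; ring, Complex.exp_add, Complex.exp_neg]
        congr 1
        rw [← Complex.ofReal_exp, Real.exp_log hn0]
        norm_num
      rw [hLn]
      have h1 : (∏ j ∈ Finset.range n, (w + j)) ≠ 0 :=
        Finset.prod_ne_zero_iff.mpr fun j _ => hwn j
      field_simp
      rw [div_self (hwn n)]
    have t1 : Tendsto (fun n : ℕ => ((n:ℂ)/(w + n))) atTop (𝓝 1) := by
      have h0 : Tendsto (fun n : ℕ => ((n:ℂ))⁻¹) atTop (𝓝 0) := by
        have := tendsto_inv_atTop_zero.comp (tendsto_natCast_atTop_atTop (R := ℝ))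
        have h2 := (Complex.continuous_ofReal.tendsto 0).comp this
        refine h2.congr fun n => ?_
        simp [Function.comp, Complex.ofReal_inv]
      have h3 : Tendsto (fun n : ℕ => w * ((n:ℂ))⁻¹ + 1) atTop (𝓝 1) := by
        have := (h0.const_mul w).add tendsto_const_nhds (b := 1)
        simpa using this
      have h4 : Tendsto (fun n : ℕ => (w * ((n:ℂ))⁻¹ + 1)⁻¹) atTop (𝓝 1) := by
        simpa using h3.inv₀ one_ne_zero
      refine h4.congr' ?_
      filter_upwards [eventually_ge_atTop 1] with n hn
      have hnC : ((n:ℕ):ℂ) ≠ 0 := Nat.cast_ne_zero.mpr (by omega)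
      push_cast
      have hstep : w * ((n:ℂ))⁻¹ + 1 = (w + n)/n := by field_simp
      rw [hstep, inv_div]
    have t2 : Tendsto (fun n => (Complex.GammaSeq w n)⁻¹) atTop (𝓝 (Complex.Gamma w)⁻¹) :=
      (Complex.GammaSeq_tendsto_Gamma w).inv₀ hΓ
    have := t1.mul t2
    rw [one_mul] at this
    rw [one_div]
    refine this.congr' ?_
    filter_upwards [eventually_ge_atTop 1] with n hn
    exact (hid n hn).symm

lemma Hfun_uniform (R : ℝ) (hR : 0 < R) :
    TendstoUniformlyOn Hfun (fun w => 1 / Complex.Gamma w) atTop (Metric.closedBall 0 R) := by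
  refine UniformCauchySeqOn.tendstoUniformlyOn_of_tendsto ?_ (fun w _ => Hfun_tendsto w)
  rw [Metric.uniformCauchySeqOn_iff]
  intro ε hε
  -- setup
  set N0 : ℕ := max 1 ⌈2*R⌉₊ with hN0
  have hN01 : 1 ≤ N0 := le_max_left _ _
  have hN0R : 2*R ≤ N0 := by
    refine le_trans (Nat.le_ceil (2*R)) ?_
    exact_mod_cast le_max_right 1 ⌈2*R⌉₊
  have hsmall : ∀ k : ℕ, N0 ≤ k → ∀ w : ℂ, ‖w‖ ≤ R → ‖w/(k:ℂ)‖ ≤ 1/2 := by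
    intro k hk w hw
    have hk0 : (0:ℝ) < k := by
      have : 1 ≤ k := le_trans hN01 hk
      exact_mod_cast this
    rw [norm_div, Complex.norm_natCast, div_le_iff₀ hk0]
    have : 2*R ≤ (k:ℝ) := le_trans hN0R (by exact_mod_cast hk)
    nlinarith
  -- the log bound
  have hlog : ∀ k : ℕ, N0 ≤ k → ∀ w : ℂ, ‖w‖ ≤ R →
      (1 + w/k ≠ 0) ∧ ‖Complex.log (1 + w/k) - w/k‖ ≤ R^2 * ((k:ℝ)⁻¹)^2 := by
    intro k hk w hw
    have h2 := hsmall k hk w hw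
    have h1 : ‖w/(k:ℂ)‖ < 1 := lt_of_le_of_lt h2 (by norm_num)
    have hne : 1 + w/k ≠ 0 := by
      intro h
      have : w/(k:ℂ) = -1 := by linear_combination h
      rw [this] at h1
      simp at h1
    refine ⟨hne, ?_⟩
    refine le_trans (Complex.norm_log_one_add_sub_self_le h1) ?_
    have hk0 : (0:ℝ) < k := by
      have : 1 ≤ k := le_trans hN01 hk
      exact_mod_cast this
    have hkR : ‖w/(k:ℂ)‖ ≤ R / k := by
      rw [norm_div, Complex.norm_natCast]
      gcongr
    have hinv : (1 - ‖w/(k:ℂ)‖)⁻¹ ≤ 2 := by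
      rw [inv_le_comm₀ (by linarith) (by norm_num)]
      linarith
    have hRk0 : (0:ℝ) ≤ R / k := by positivity
    calc ‖w/(k:ℂ)‖^2 * (1 - ‖w/(k:ℂ)‖)⁻¹ / 2
        ≤ (R/k)^2 * 2 / 2 := by
          apply div_le_div_of_nonneg_right ?_ (by norm_num)
          refine mul_le_mul ?_ hinv (inv_nonneg.mpr (by linarith)) (by positivity)
          have := norm_nonneg (w/(k:ℂ))
          nlinarith
      _ = R^2 * ((k:ℝ)⁻¹)^2 := by field_simp
  -- uniform bound M
  obtain ⟨C, hC⟩ : ∃ C : ℝ, ∀ n, |cseq n| ≤ C := by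
    have habs : Tendsto (fun n => |cseq n|) atTop (𝓝 |Real.eulerMascheroniConstant|) :=
      cseq_tendsto.abs
    obtain ⟨C, hC⟩ := habs.bddAbove_range
    exact ⟨C, fun n => hC ⟨n, rfl⟩⟩
  have hC0 : 0 ≤ C := le_trans (abs_nonneg _) (hC 0)
  set M : ℝ := R * Real.exp (C*R) * ((1+R)*Real.exp R)^N0 * Real.exp (2*R^2) with hM
  have hM0 : 0 < M := by positivity
  have hbound : ∀ n : ℕ, N0 ≤ n → ∀ w : ℂ, ‖w‖ ≤ R → ‖Hfun n w‖ ≤ M := by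
    intro n hn w hw
    rw [P1 n (le_trans hN01 hn) w, norm_mul, norm_mul, norm_prod]
    have hb1 : ‖Complex.exp ((cseq n : ℂ) * w)‖ ≤ Real.exp (C*R) := by
      refine le_trans (norm_exp_le' _) (Real.exp_le_exp.mpr ?_)
      rw [norm_mul, Complex.norm_real, Real.norm_eq_abs]
      exact mul_le_mul (hC n) hw (norm_nonneg w) (le_trans (abs_nonneg _) (hC n))
    have hsplit := Finset.prod_Ico_consecutive
      (fun k : ℕ => ‖(1 + w/(k:ℂ)) * Complex.exp (-(w/(k:ℂ)))‖) hN01 hn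
    rw [← hsplit]
    have hb2 : ∏ k ∈ Finset.Ico 1 N0, ‖(1 + w/(k:ℂ)) * Complex.exp (-(w/(k:ℂ)))‖
        ≤ ((1+R)*Real.exp R)^N0 := by
      have hstep : ∀ k ∈ Finset.Ico 1 N0, ‖(1 + w/(k:ℂ)) * Complex.exp (-(w/(k:ℂ)))‖
          ≤ (1+R)*Real.exp R := by
        intro k hk
        have hk1 : 1 ≤ k := (Finset.mem_Ico.mp hk).1
        have hk0 : (1:ℝ) ≤ (k:ℝ) := by exact_mod_cast hk1
        have hwk : ‖w/(k:ℂ)‖ ≤ R := by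
          rw [norm_div, Complex.norm_natCast]
          calc ‖w‖/(k:ℝ) ≤ R/(k:ℝ) := div_le_div_of_nonneg_right hw (by linarith) |>.trans_eq rfl
            _ ≤ R := by rw [div_le_iff₀ (by linarith)]; nlinarith
        rw [norm_mul]
        refine mul_le_mul ?_ ?_ (norm_nonneg _) (by positivity)
        · calc ‖1 + w/(k:ℂ)‖ ≤ ‖(1:ℂ)‖ + ‖w/(k:ℂ)‖ := norm_add_le _ _
            _ ≤ 1 + R := by rw [norm_one]; linarith
        · refine le_trans (norm_exp_le' _) (Real.exp_le_exp.mpr ?_)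
          rw [norm_neg]; exact hwk
      calc ∏ k ∈ Finset.Ico 1 N0, ‖(1 + w/(k:ℂ)) * Complex.exp (-(w/(k:ℂ)))‖
          ≤ ∏ _k ∈ Finset.Ico 1 N0, ((1+R)*Real.exp R) :=
            Finset.prod_le_prod (fun _ _ => norm_nonneg _) hstep
        _ = ((1+R)*Real.exp R)^(Finset.Ico 1 N0).card := Finset.prod_const _
        _ ≤ ((1+R)*Real.exp R)^N0 := by
            apply pow_le_pow_right₀ (by nlinarith [Real.one_le_exp (le_of_lt hR)])
            rw [Nat.card_Ico]; omega
    have hb3 : ∏ k ∈ Finset.Ico N0 n, ‖(1 + w/(k:ℂ)) * Complex.exp (-(w/(k:ℂ)))‖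
        ≤ Real.exp (2*R^2) := by
      have hstep : ∀ k ∈ Finset.Ico N0 n, ‖(1 + w/(k:ℂ)) * Complex.exp (-(w/(k:ℂ)))‖
          ≤ Real.exp (R^2 * ((k:ℝ)⁻¹)^2) := by
        intro k hk
        have hk1 := (Finset.mem_Ico.mp hk).1
        obtain ⟨hne, hlb⟩ := hlog k hk1 w hw
        have hid : (1 + w/(k:ℂ)) * Complex.exp (-(w/(k:ℂ)))
            = Complex.exp (Complex.log (1 + w/(k:ℂ)) - w/(k:ℂ)) := by
          rw [sub_eq_add_neg, Complex.exp_add, Complex.exp_log hne]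
        rw [hid]
        exact le_trans (norm_exp_le' _) (Real.exp_le_exp.mpr hlb)
      calc ∏ k ∈ Finset.Ico N0 n, ‖(1 + w/(k:ℂ)) * Complex.exp (-(w/(k:ℂ)))‖
          ≤ ∏ k ∈ Finset.Ico N0 n, Real.exp (R^2 * ((k:ℝ)⁻¹)^2) :=
            Finset.prod_le_prod (fun _ _ => norm_nonneg _) hstep
        _ = Real.exp (∑ k ∈ Finset.Ico N0 n, R^2 * ((k:ℝ)⁻¹)^2) := (Real.exp_sum _ _).symm
        _ ≤ Real.exp (2*R^2) := by
            apply Real.exp_le_exp.mpr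
            rw [← Finset.mul_sum]
            have := sum_inv_sq_le N0 n hN01
            have hN0r : (1:ℝ) ≤ (N0:ℝ) := by exact_mod_cast hN01
            calc R^2 * ∑ k ∈ Finset.Ico N0 n, ((k:ℝ)⁻¹)^2 ≤ R^2 * (2/(N0:ℝ)) := by nlinarith
              _ ≤ 2*R^2 := by
                  have h22 : (2:ℝ)/(N0:ℝ) ≤ 2 := div_le_self (by norm_num) hN0r
                  nlinarith
    have hP1 : (0:ℝ) ≤ ∏ k ∈ Finset.Ico 1 N0, ‖(1 + w/(k:ℂ)) * Complex.exp (-(w/(k:ℂ)))‖ :=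
      Finset.prod_nonneg fun _ _ => norm_nonneg _
    have hP2 : (0:ℝ) ≤ ∏ k ∈ Finset.Ico N0 n, ‖(1 + w/(k:ℂ)) * Complex.exp (-(w/(k:ℂ)))‖ :=
      Finset.prod_nonneg fun _ _ => norm_nonneg _
    have h12 : ‖w‖ * ‖Complex.exp ((cseq n : ℂ) * w)‖ ≤ R * Real.exp (C*R) :=
      mul_le_mul hw hb1 (norm_nonneg _) (le_of_lt hR)
    have h34 : (∏ k ∈ Finset.Ico 1 N0, ‖(1 + w/(k:ℂ)) * Complex.exp (-(w/(k:ℂ)))‖)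
          * ∏ k ∈ Finset.Ico N0 n, ‖(1 + w/(k:ℂ)) * Complex.exp (-(w/(k:ℂ)))‖
        ≤ ((1+R)*Real.exp R)^N0 * Real.exp (2*R^2) :=
      mul_le_mul hb2 hb3 hP2 (by positivity)
    calc ‖w‖ * ‖Complex.exp ((cseq n : ℂ) * w)‖
          * ((∏ k ∈ Finset.Ico 1 N0, ‖(1 + w/(k:ℂ)) * Complex.exp (-(w/(k:ℂ)))‖)
            * ∏ k ∈ Finset.Ico N0 n, ‖(1 + w/(k:ℂ)) * Complex.exp (-(w/(k:ℂ)))‖)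
        ≤ (R * Real.exp (C*R)) * (((1+R)*Real.exp R)^N0 * Real.exp (2*R^2)) :=
          mul_le_mul h12 h34 (mul_nonneg hP1 hP2)
            (by positivity)
      _ = M := by rw [hM]; ring
  -- step identity
  have hstep : ∀ a b : ℕ, N0 ≤ b → b ≤ a → ∀ w : ℂ, ‖w‖ ≤ R →
      Hfun a w = Hfun b w * Complex.exp (((cseq a - cseq b : ℝ):ℂ) * w
        + ∑ k ∈ Finset.Ico b a, (Complex.log (1 + w/(k:ℂ)) - w/(k:ℂ))) := by
    intro a b hb hba w hw
    have h1b : 1 ≤ b := le_trans hN01 hb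
    have htail : ∏ k ∈ Finset.Ico b a, ((1 + w/(k:ℂ)) * Complex.exp (-(w/(k:ℂ))))
        = Complex.exp (∑ k ∈ Finset.Ico b a, (Complex.log (1 + w/(k:ℂ)) - w/(k:ℂ))) := by
      rw [Complex.exp_sum]
      refine Finset.prod_congr rfl fun k hk => ?_
      obtain ⟨hne, -⟩ := hlog k (le_trans hb (Finset.mem_Ico.mp hk).1) w hw
      rw [sub_eq_add_neg, Complex.exp_add, Complex.exp_log hne]
    have hcm : Complex.exp ((cseq a : ℂ) * w)
        = Complex.exp ((cseq b : ℂ) * w) * Complex.exp (((cseq a - cseq b : ℝ):ℂ) * w) := by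
      rw [← Complex.exp_add]
      congr 1
      push_cast
      ring
    calc Hfun a w = w * Complex.exp ((cseq a : ℂ) * w)
          * ∏ k ∈ Finset.Ico 1 a, ((1 + w/(k:ℂ)) * Complex.exp (-(w/(k:ℂ)))) :=
          P1 a (le_trans h1b hba) w
      _ = w * Complex.exp ((cseq a : ℂ) * w)
          * ((∏ k ∈ Finset.Ico 1 b, ((1 + w/(k:ℂ)) * Complex.exp (-(w/(k:ℂ)))))
            * ∏ k ∈ Finset.Ico b a, ((1 + w/(k:ℂ)) * Complex.exp (-(w/(k:ℂ))))) := by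
          rw [Finset.prod_Ico_consecutive _ h1b hba]
      _ = (w * Complex.exp ((cseq b : ℂ) * w)
          * ∏ k ∈ Finset.Ico 1 b, ((1 + w/(k:ℂ)) * Complex.exp (-(w/(k:ℂ)))))
          * (Complex.exp (((cseq a - cseq b : ℝ):ℂ) * w)
            * Complex.exp (∑ k ∈ Finset.Ico b a, (Complex.log (1 + w/(k:ℂ)) - w/(k:ℂ)))) := by
          rw [hcm, htail]
          ring
      _ = Hfun b w * Complex.exp (((cseq a - cseq b : ℝ):ℂ) * w
          + ∑ k ∈ Finset.Ico b a, (Complex.log (1 + w/(k:ℂ)) - w/(k:ℂ))) := by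
          rw [P1 b h1b w, Complex.exp_add]
  -- choose the threshold
  set δ : ℝ := min 1 (ε/(4*M+4)) with hδ
  have hδ0 : 0 < δ := lt_min one_pos (by positivity)
  have hδ1 : δ ≤ 1 := min_le_left _ _
  have hδε : δ ≤ ε/(4*M+4) := min_le_right _ _
  have hcau : CauchySeq cseq := cseq_tendsto.cauchySeq
  obtain ⟨Kc, hKc⟩ := Metric.cauchySeq_iff.mp hcau (δ/(2*R)) (by positivity)
  set r4 : ℝ := 4*R^2/δ with hr4
  set K2 : ℕ := max 1 ⌈r4⌉₊ with hK2def
  have hK2 : r4 ≤ (K2:ℝ) := by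
    refine le_trans (Nat.le_ceil _) ?_
    exact_mod_cast le_max_right 1 ⌈r4⌉₊
  refine ⟨max (max N0 Kc) K2, ?_⟩
  have hkey : ∀ a b : ℕ, max (max N0 Kc) K2 ≤ a → max (max N0 Kc) K2 ≤ b → b ≤ a →
      ∀ w : ℂ, w ∈ Metric.closedBall (0:ℂ) R → dist (Hfun a w) (Hfun b w) < ε := by
    intro a b ha hb hba w hwK
    have hw : ‖w‖ ≤ R := by
      simpa [Metric.mem_closedBall, dist_zero_right] using hwK
    have hbN0 : N0 ≤ b := le_trans (le_trans (le_max_left _ _) (le_max_left _ _)) hb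
    have hbK2 : K2 ≤ b := le_trans (le_max_right _ _) hb
    have hb1 : 1 ≤ b := le_trans hN01 hbN0
    have hb0 : (0:ℝ) < b := by exact_mod_cast hb1
    set D : ℂ := ((cseq a - cseq b : ℝ):ℂ) * w
      + ∑ k ∈ Finset.Ico b a, (Complex.log (1 + w/(k:ℂ)) - w/(k:ℂ)) with hD
    have hnormD : ‖D‖ ≤ δ := by
      refine le_trans (norm_add_le _ _) ?_
      have hc1 : ‖((cseq a - cseq b : ℝ):ℂ) * w‖ ≤ δ/2 := by
        rw [norm_mul, Complex.norm_real, Real.norm_eq_abs]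
        have haKc : Kc ≤ a := le_trans (le_trans (le_max_right _ _) (le_max_left _ _)) ha
        have hbKc : Kc ≤ b := le_trans (le_trans (le_max_right _ _) (le_max_left _ _)) hb
        have hdist : |cseq a - cseq b| ≤ δ/(2*R) := by
          rw [← Real.dist_eq]
          exact le_of_lt (hKc a haKc b hbKc)
        calc |cseq a - cseq b| * ‖w‖ ≤ (δ/(2*R)) * R :=
              mul_le_mul hdist hw (norm_nonneg w) (by positivity)
          _ = δ/2 := by field_simp
      have hc2 : ‖∑ k ∈ Finset.Ico b a, (Complex.log (1 + w/(k:ℂ)) - w/(k:ℂ))‖ ≤ δ/2 := by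
        refine le_trans (norm_sum_le _ _) ?_
        have hterm : ∀ k ∈ Finset.Ico b a, ‖Complex.log (1 + w/(k:ℂ)) - w/(k:ℂ)‖
            ≤ R^2 * ((k:ℝ)⁻¹)^2 := fun k hk =>
          (hlog k (le_trans hbN0 (Finset.mem_Ico.mp hk).1) w hw).2
        have hb4 : 4*R^2 ≤ δ * b := by
          have h5 : r4 ≤ (b:ℝ) := le_trans hK2 (by exact_mod_cast hbK2)
          rw [hr4, div_le_iff₀ hδ0] at h5
          nlinarith
        calc ∑ k ∈ Finset.Ico b a, ‖Complex.log (1 + w/(k:ℂ)) - w/(k:ℂ)‖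
            ≤ ∑ k ∈ Finset.Ico b a, R^2 * ((k:ℝ)⁻¹)^2 := Finset.sum_le_sum hterm
          _ = R^2 * ∑ k ∈ Finset.Ico b a, ((k:ℝ)⁻¹)^2 := by rw [Finset.mul_sum]
          _ ≤ R^2 * (2/(b:ℝ)) := by
              gcongr
              exact sum_inv_sq_le b a hb1
          _ ≤ δ/2 := by
              rw [show R^2 * (2/(b:ℝ)) = 2*R^2/(b:ℝ) from by ring,
                div_le_div_iff₀ hb0 two_pos]
              nlinarith
      linarith
    have hMb := hbound b hbN0 w hw
    rw [dist_eq_norm, hstep a b hbN0 hba w hw,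
      show Hfun b w * Complex.exp D - Hfun b w = Hfun b w * (Complex.exp D - 1) from by ring,
      norm_mul]
    have hexp1 : ‖Complex.exp D - 1‖ ≤ 2*‖D‖ := by
      have := Complex.norm_exp_sub_one_le (x := D) (le_trans hnormD hδ1)
      simpa using this
    calc ‖Hfun b w‖ * ‖Complex.exp D - 1‖ ≤ M * (2*δ) :=
          mul_le_mul hMb (le_trans hexp1 (by linarith)) (norm_nonneg _) (le_of_lt hM0)
      _ < ε := by
          have h4 : δ * (4*M+4) ≤ ε := (le_div_iff₀ (by positivity)).mp hδε
          nlinarith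
  intro m hm n hn w hwK
  rcases le_total n m with h | h
  · exact hkey m n hm hn h w hwK
  · rw [dist_comm]
    exact hkey n m hn hm h w hwK

/-- Mod-Poisson convergence of the `B`-Stirling distributions: the mgf of `X_n` equals
`(1/(2^{2n} n!)) (e^z)_{2n} / (e^z/2)_n` (stated in product form), and uniformly on
compact subsets of `ℂ`,
`E[e^{z X_n}] / exp(((1/2)log n)(e^z − 1)) → 2^{e^z} Γ(e^z/2)/(2√π Γ(e^z))
 = 1/Γ((e^z+1)/2)`. -/
theorem Bcoef_mod_poisson :
    (∀ (n : ℕ) (z : ℂ),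
      (2 : ℂ) ^ (2 * n) * (n.factorial : ℂ) * Bmgf n z
          * risingFactorial (Complex.exp z / 2) n
        = risingFactorial (Complex.exp z) (2 * n)) ∧
    ∀ K : Set ℂ, IsCompact K →
      TendstoUniformlyOn
        (fun (n : ℕ) (z : ℂ) =>
          Bmgf n z / Complex.exp (((Real.log n / 2 : ℝ) : ℂ) * (Complex.exp z - 1)))
        (fun z => 1 / Complex.Gamma ((Complex.exp z + 1) / 2))
        atTop K := by
  constructor
  · intro n z
    rw [risingFactorial, risingFactorial, L2 n (Complex.exp z),
      show (2:ℂ)^(2*n) = 2^n * 2^n from by rw [two_mul, pow_add]]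
    linear_combination ((2:ℂ)^n * ∏ i ∈ range n, (Complex.exp z / 2 + (i:ℂ)))
      * Bmgf_mul_eq n z
  · intro K hK
    have hg : Continuous fun z : ℂ => (Complex.exp z + 1)/2 :=
      (Complex.continuous_exp.add continuous_const).div_const 2
    obtain ⟨r, hr⟩ := (hK.image hg).isBounded.subset_closedBall 0
    obtain ⟨R, hrR, hR⟩ : ∃ R : ℝ, r ≤ R ∧ 0 < R :=
      ⟨max r 1, le_max_left _ _, lt_of_lt_of_le one_pos (le_max_right _ _)⟩
    have hsub : K ⊆ (fun z : ℂ => (Complex.exp z + 1)/2) ⁻¹' Metric.closedBall 0 R := by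
      intro z hz
      have h1 : (Complex.exp z + 1)/2 ∈ Metric.closedBall (0:ℂ) r :=
        hr (Set.mem_image_of_mem _ hz)
      have h2 : Metric.closedBall (0:ℂ) r ⊆ Metric.closedBall (0:ℂ) R :=
        Metric.closedBall_subset_closedBall hrR
      exact Set.mem_preimage.mpr (h2 h1)
    have h1 : TendstoUniformlyOn Hfun (fun w => 1 / Complex.Gamma w) atTop
        (Metric.closedBall 0 R) := Hfun_uniform R hR
    have h2 := h1.comp (fun z : ℂ => (Complex.exp z + 1)/2)
    have huni := h2.mono hsub
    refine huni.congr ?_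
    refine Eventually.of_forall fun n => fun z _ => ?_
    show Hfun n ((Complex.exp z + 1)/2)
      = Bmgf n z / Complex.exp (((Real.log n / 2 : ℝ) : ℂ) * (Complex.exp z - 1))
    rw [L3 n z, Hfun]
    rw [show -(Real.log n : ℂ) * ((Complex.exp z + 1)/2 - 1)
        = -(((Real.log n / 2 : ℝ):ℂ) * (Complex.exp z - 1)) from by push_cast; ring,
      Complex.exp_neg, div_eq_mul_inv]
    ring
end
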